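/- arXiv:2003.02285 — 13 statements merged into one kernel-verified Lean document; each statement's English description precedes it below -/
import Mathlib

section
/- Let D be a natural number and let X' and Z' be Hermitian D×D complex matrices satisfying X'² = Z'² = 1 and the anticommutation relation X'·Z' + Z'·X' = 0. Then there exists d with D = 2*d and a unitary D×D complex matrix U such that, after reindexing Fin D by Fin 2 × Fin d, U·X'·U⁻¹ equals the Kronecker product X ⊗ₖ (1 : Matrix (Fin d) (Fin d) ℂ) and U·Z'·U⁻¹ equals Z ⊗ₖ (1 : Matrix (Fin d) (Fin d) ℂ). -/
/-!
Because `X'` anticommutes with `Z'`, it maps each eigenspace of `Z'` to the eigenspace of the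
opposite eigenvalue, and `X'² = 1` makes this a bijection. Hence if `b` is an orthonormal basis
of the `+1`-eigenspace of `Z'`, the vectors `bᵢ` and `X' bᵢ` together form an orthonormal basis
of `ℂᴰ`: the eigenspaces of the Hermitian `Z'` for `1` and `-1` are orthogonal, and
`v = ½(v + Z'v) + X'(X'(½(v - Z'v)))`. In this basis `X'` swaps `bᵢ ↔ X' bᵢ` and `Z'` is `±1`
on them, i.e. they act as `X ⊗ 1` and `Z ⊗ 1`; `U` is the change of basis.
-/

open Matrix Module.End Submodule
open scoped Kronecker

section Anticommuting

variable {R V ι : Type*} [CommRing R] [AddCommGroup V] [Module R V] {x z : Module.End R V}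

theorem apply_mem_eigenspace_neg_of_anticommute (hxz : x * z + z * x = 0) {μ : R} {v : V}
    (hv : v ∈ z.eigenspace μ) : x v ∈ z.eigenspace (-μ) := by
  rw [mem_eigenspace_iff] at hv ⊢
  have hxzv : x (z v) + z (x v) = 0 := congr($hxz v)
  rw [hv, map_smul] at hxzv
  rw [neg_smul, ← neg_eq_of_add_eq_zero_right hxzv]

/-- The vector `(a, i)` stands for `|a⟩ ⊗ bᵢ`, realised as `xᵃ bᵢ`. -/
def qubitFamily (x : Module.End R V) (b : ι → V) : Fin 2 × ι → V :=
  fun p => ![b p.2, x (b p.2)] p.1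

variable [Fintype ι] [DecidableEq ι] {b : ι → V} (g : Module.Basis (Fin 2 × ι) R V)

theorem toMatrix_eq_pauliX_kronecker_one (hx2 : x * x = 1) (hg : ⇑g = qubitFamily x b) :
    LinearMap.toMatrix g g x = !![0, 1; 1, 0] ⊗ₖ 1 := by
  have hx0 : ∀ i, x (g (0, i)) = g (1, i) := by simp [hg, qubitFamily]
  have hx1 : ∀ i, x (g (1, i)) = g (0, i) := fun i => by
    simp [hg, qubitFamily, ← Module.End.mul_apply, hx2]
  ext ⟨a, i⟩ ⟨c, j⟩
  rw [LinearMap.toMatrix_apply, kroneckerMap_apply]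
  fin_cases a <;> fin_cases c <;>
    simp [hx0, hx1, Module.Basis.repr_self, Finsupp.single_apply, Matrix.one_apply, eq_comm]

theorem toMatrix_eq_pauliZ_kronecker_one (hxz : x * z + z * x = 0)
    (hbz : ∀ i, b i ∈ z.eigenspace 1) (hg : ⇑g = qubitFamily x b) :
    LinearMap.toMatrix g g z = !![1, 0; 0, -1] ⊗ₖ 1 := by
  have hz0 : ∀ i, z (g (0, i)) = g (0, i) := fun i => by
    simpa [hg, qubitFamily] using mem_eigenspace_iff.mp (hbz i)
  have hz1 : ∀ i, z (g (1, i)) = -g (1, i) := fun i => by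
    simpa [hg, qubitFamily] using
      mem_eigenspace_iff.mp (apply_mem_eigenspace_neg_of_anticommute hxz (hbz i))
  ext ⟨a, i⟩ ⟨c, j⟩
  rw [LinearMap.toMatrix_apply, kroneckerMap_apply]
  fin_cases a <;> fin_cases c <;>
    simp [hz0, hz1, Module.Basis.repr_self, Finsupp.single_apply, Matrix.one_apply, eq_comm,
      neg_ite]

end Anticommuting

section Spanning

variable {K V ι : Type*} [Field K] [NeZero (2 : K)] [AddCommGroup V] [Module K V]
  {x z : Module.End K V}

theorem eigenspace_one_sup_map_eigenspace_one_eq_top (hx2 : x * x = 1) (hz2 : z * z = 1)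
    (hxz : x * z + z * x = 0) : z.eigenspace 1 ⊔ (z.eigenspace 1).map x = ⊤ := by
  refine eq_top_iff.mpr fun v _ => ?_
  have hz2v : z (z v) = v := congr($hz2 v)
  set u : V := (2⁻¹ : K) • (v - z v)
  have hu : u ∈ z.eigenspace (-1) := by
    rw [mem_eigenspace_iff, map_smul, map_sub, hz2v, neg_one_smul, ← smul_neg, neg_sub]
  have hxu : x u ∈ z.eigenspace 1 := by
    simpa using apply_mem_eigenspace_neg_of_anticommute hxz hu
  have hplus : (2⁻¹ : K) • (v + z v) ∈ z.eigenspace 1 := by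
    rw [mem_eigenspace_iff, map_smul, map_add, hz2v, one_smul, add_comm]
  have hv : v = (2⁻¹ : K) • (v + z v) + x (x u) := by
    rw [show x (x u) = u from congr($hx2 u), ← smul_add, add_add_sub_cancel, ← two_smul K,
      smul_smul, inv_mul_cancel₀ two_ne_zero, one_smul]
  rw [hv]
  exact add_mem_sup hplus (mem_map_of_mem hxu)

theorem span_qubitFamily_eq_top (hx2 : x * x = 1) (hz2 : z * z = 1) (hxz : x * z + z * x = 0)
    {b : ι → V} (hb : span K (Set.range b) = z.eigenspace 1) :
    span K (Set.range (qubitFamily x b)) = ⊤ := by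
  rw [eq_top_iff, ← eigenspace_one_sup_map_eigenspace_one_eq_top hx2 hz2 hxz, ← hb, map_span,
    sup_le_iff]
  constructor <;> refine span_mono ?_
  · rintro _ ⟨i, rfl⟩
    exact ⟨(0, i), rfl⟩
  · rintro _ ⟨_, ⟨i, rfl⟩, rfl⟩
    exact ⟨(1, i), rfl⟩

end Spanning

section InnerProduct

variable {𝕜 E ι : Type*} [RCLike 𝕜] [NormedAddCommGroup E] [InnerProductSpace 𝕜 E]
  {x z : Module.End 𝕜 E}

open InnerProductSpace in
theorem orthonormal_qubitFamily (hx : x.IsSymmetric) (hz : z.IsSymmetric) (hx2 : x * x = 1)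
    (hxz : x * z + z * x = 0) {b : ι → E} (hb : Orthonormal 𝕜 b)
    (hbz : ∀ i, b i ∈ z.eigenspace 1) : Orthonormal 𝕜 (qubitFamily x b) := by
  classical
  have hxx : ∀ i, x (x (b i)) = b i := fun i => congr($hx2 (b i))
  have hcross : ∀ i j, ⟪b i, x (b j)⟫_𝕜 = 0 := fun i j =>
    hz.orthogonalFamily_eigenspaces (by norm_num : (1 : 𝕜) ≠ -1) ⟨_, hbz i⟩
      ⟨_, apply_mem_eigenspace_neg_of_anticommute hxz (hbz j)⟩
  rw [orthonormal_iff_ite] at hb ⊢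
  rintro ⟨a, i⟩ ⟨c, j⟩
  fin_cases a <;> fin_cases c <;> simp [qubitFamily, hb, hcross, hx _ (x _), hxx, hx _ (b _)]

theorem exists_orthonormalBasis_toMatrix_eq_pauli_kronecker_one [FiniteDimensional 𝕜 E]
    (hx : x.IsSymmetric) (hz : z.IsSymmetric) (hx2 : x * x = 1) (hz2 : z * z = 1)
    (hxz : x * z + z * x = 0) :
    ∃ (d : ℕ) (g : OrthonormalBasis (Fin 2 × Fin d) 𝕜 E),
      LinearMap.toMatrix g.toBasis g.toBasis x = !![0, 1; 1, 0] ⊗ₖ 1 ∧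
      LinearMap.toMatrix g.toBasis g.toBasis z = !![1, 0; 0, -1] ⊗ₖ 1 := by
  set W := z.eigenspace 1
  let b := stdOrthonormalBasis 𝕜 W
  have hbz : ∀ i, (b i : E) ∈ W := fun i => (b i).2
  have hbspan : span 𝕜 (Set.range fun i => (b i : E)) = W := by
    have := congrArg (map W.subtype) b.toBasis.span_eq
    rwa [map_span, ← Set.range_comp, map_subtype_top] at this
  let g := OrthonormalBasis.mk
    (orthonormal_qubitFamily hx hz hx2 hxz (b.orthonormal.comp_linearIsometry W.subtypeₗᵢ) hbz)
    (span_qubitFamily_eq_top hx2 hz2 hxz hbspan).ge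
  have hg : ⇑g.toBasis = qubitFamily x fun i => (b i : E) :=
    g.coe_toBasis.trans (OrthonormalBasis.coe_mk _ _)
  exact ⟨_, g, toMatrix_eq_pauliX_kronecker_one _ hx2 hg,
    toMatrix_eq_pauliZ_kronecker_one _ hxz hbz hg⟩

theorem Matrix.exists_unitary_reindex_conj_eq_toMatrix {m n : Type*} [Fintype m] [DecidableEq m]
    [Fintype n] [DecidableEq n] (g : OrthonormalBasis m 𝕜 (EuclideanSpace 𝕜 n)) (e : n ≃ m) :
    ∃ U ∈ unitaryGroup n 𝕜, ∀ A : Matrix n n 𝕜,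
      reindex e e (U * A * U⁻¹) = LinearMap.toMatrix g.toBasis g.toBasis (toEuclideanLin A) := by
  set g' := g.reindex e.symm
  set std := EuclideanSpace.basisFun n 𝕜
  refine ⟨g'.toBasis.toMatrix std.toBasis, g'.toMatrix_orthonormalBasis_mem_unitary std,
    fun A => ?_⟩
  have hinv : (g'.toBasis.toMatrix std.toBasis)⁻¹ = std.toBasis.toMatrix g'.toBasis :=
    inv_eq_left_inv (Module.Basis.toMatrix_mul_toMatrix_flip _ _)
  have hA : LinearMap.toMatrix std.toBasis std.toBasis (toEuclideanLin A) = A :=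
    LinearMap.toMatrix_toLin _ _ A
  conv_lhs => rw [hinv, ← hA, basis_toMatrix_mul_linearMap_toMatrix_mul_basis_toMatrix]
  ext p q
  simp [g', LinearMap.toMatrix_apply]

end InnerProduct

/-- Hermitian `X'`, `Z'` with `X'² = Z'² = 1` and `{X', Z'} = 0` are
simultaneously unitarily equivalent to `X ⊗ₖ 1` and `Z ⊗ₖ 1` on `ℂ² ⊗ ℂᵈ`, with `D = 2 * d`. -/
theorem five_qubit_qubit_extraction (D : ℕ) (X' Z' : Matrix (Fin D) (Fin D) ℂ)
    (hXherm : X'.IsHermitian) (hZherm : Z'.IsHermitian)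
    (hX2 : X' * X' = 1) (hZ2 : Z' * Z' = 1)
    (hanti : X' * Z' + Z' * X' = 0) :
    ∃ (d : ℕ) (e : Fin D ≃ Fin 2 × Fin d) (U : Matrix (Fin D) (Fin D) ℂ),
      D = 2 * d ∧
      U ∈ Matrix.unitaryGroup (Fin D) ℂ ∧
      Matrix.reindex e e (U * X' * U⁻¹) =
        (!![0, 1; 1, 0] : Matrix (Fin 2) (Fin 2) ℂ) ⊗ₖ (1 : Matrix (Fin d) (Fin d) ℂ) ∧
      Matrix.reindex e e (U * Z' * U⁻¹) =
        (!![1, 0; 0, -1] : Matrix (Fin 2) (Fin 2) ℂ) ⊗ₖ (1 : Matrix (Fin d) (Fin d) ℂ) := by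
  set x : Module.End ℂ (EuclideanSpace ℂ (Fin D)) := toLpLinAlgEquiv 2 X'
  set z : Module.End ℂ (EuclideanSpace ℂ (Fin D)) := toLpLinAlgEquiv 2 Z'
  have hx2 : x * x = 1 := by rw [← map_mul, hX2, map_one]
  have hz2 : z * z = 1 := by rw [← map_mul, hZ2, map_one]
  have hxz : x * z + z * x = 0 := by rw [← map_mul, ← map_mul, ← map_add, hanti, map_zero]
  obtain ⟨d, g, hgx, hgz⟩ := exists_orthonormalBasis_toMatrix_eq_pauli_kronecker_one
    (isSymmetric_toEuclideanLin_iff.mpr hXherm) (isSymmetric_toEuclideanLin_iff.mpr hZherm)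
    hx2 hz2 hxz
  have hD : D = 2 * d := by
    simpa using finrank_euclideanSpace_fin.symm.trans (Module.finrank_eq_card_basis g.toBasis)
  let e : Fin D ≃ Fin 2 × Fin d := (finCongr hD).trans finProdFinEquiv.symm
  obtain ⟨U, hU, hconj⟩ := exists_unitary_reindex_conj_eq_toMatrix g e
  exact ⟨d, e, U, hD, hU, (hconj X').trans hgx, (hconj Z').trans hgz⟩
end

section
/- Let Z' be a Hermitian D×D complex matrix with Z'² = 1, and suppose there exists a unitary D×D complex matrix X' with X'·Z' = −(Z'·X'). Then the eigenspace of Z' (viewed as an endomorphism of ℂ^D via Matrix.toLin') for eigenvalue 1 and the eigenspace for eigenvalue −1 have equal finite dimension, and consequently D is even, D = 2·(dim of the +1 eigenspace). -/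
open Matrix Module

/-!
A unitary `X'` anticommuting with `Z'` is injective and carries each `±1`-eigenspace of `Z'`
into the other, so the two have equal dimension. Since `Z'` is an involution and `2 ≠ 0`,
`v = ½ (v + Z' v) + ½ (v - Z' v)` splits `ℂ^D` as the direct sum of these eigenspaces.
-/

namespace Module.End

variable {K V : Type*} [Field K] [AddCommGroup V] [Module K V]

theorem isCompl_eigenspace_one_eigenspace_neg_one (h2 : (2 : K) ≠ 0) {f : End K V}
    (hf : f * f = 1) : IsCompl (eigenspace f 1) (eigenspace f (-1)) := by
  have hff (v : V) : f (f v) = v := LinearMap.congr_fun hf v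
  refine ⟨?_, ?_⟩
  · rw [Submodule.disjoint_def]
    intro v h1 h2'
    rw [mem_eigenspace_iff, one_smul] at h1
    rw [mem_eigenspace_iff, neg_one_smul, h1] at h2'
    have : (2 : K) • v = 0 := by rw [two_smul]; nth_rewrite 2 [h2']; exact add_neg_cancel v
    exact (smul_eq_zero.mp this).resolve_left h2
  · rw [codisjoint_iff, eq_top_iff]
    intro v _
    have hv : v = (2 : K)⁻¹ • (v + f v) + (2 : K)⁻¹ • (v - f v) := by
      rw [← smul_add, add_add_sub_cancel, ← two_smul K, smul_smul, inv_mul_cancel₀ h2, one_smul]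
    rw [hv]
    refine Submodule.add_mem_sup ?_ ?_ <;>
      simp only [mem_eigenspace_iff, map_smul, map_add, map_sub, hff]
    · rw [one_smul, add_comm]
    · rw [neg_one_smul, ← smul_neg, neg_sub]

theorem finrank_eigenspace_one_add_finrank_eigenspace_neg_one [FiniteDimensional K V]
    (h2 : (2 : K) ≠ 0) {f : End K V} (hf : f * f = 1) :
    finrank K (eigenspace f 1) + finrank K (eigenspace f (-1)) = finrank K V :=
  Submodule.finrank_add_eq_of_isCompl (isCompl_eigenspace_one_eigenspace_neg_one h2 hf)

theorem mapsTo_eigenspace_neg_of_mul_eq_neg {R M : Type*} [CommRing R] [AddCommGroup M]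
    [Module R M] {f g : End R M} (h : g * f = -(f * g)) (μ : R) :
    Set.MapsTo g (eigenspace f μ) (eigenspace f (-μ)) := by
  intro v hv
  rw [SetLike.mem_coe, mem_eigenspace_iff] at hv ⊢
  have := LinearMap.congr_fun h v
  simp only [mul_apply, LinearMap.neg_apply, hv, map_smul] at this
  rw [neg_smul, this, neg_neg]

theorem finrank_eigenspace_le_of_mul_eq_neg [FiniteDimensional K V] {f g : End K V}
    (h : g * f = -(f * g)) (hg : Function.Injective g) (μ : K) :
    finrank K (eigenspace f μ) ≤ finrank K (eigenspace f (-μ)) :=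
  LinearMap.finrank_le_finrank_of_injective
    (f := g.restrict fun _ hv ↦ mapsTo_eigenspace_neg_of_mul_eq_neg h μ hv)
    fun _ _ hab ↦ Subtype.ext (hg (congrArg Subtype.val hab))

theorem finrank_eigenspace_neg_eq_of_mul_eq_neg [FiniteDimensional K V] {f g : End K V}
    (h : g * f = -(f * g)) (hg : Function.Injective g) (μ : K) :
    finrank K (eigenspace f (-μ)) = finrank K (eigenspace f μ) := by
  refine le_antisymm ?_ (finrank_eigenspace_le_of_mul_eq_neg h hg μ)
  have h' := finrank_eigenspace_le_of_mul_eq_neg h hg (-μ)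
  rwa [neg_neg] at h'

end Module.End

theorem eigenspaces_of_anticommuting_involution_general (D : ℕ) (Z' : Matrix (Fin D) (Fin D) ℂ)
    (hZ2 : Z' * Z' = 1)
    (hX : ∃ X' : Matrix (Fin D) (Fin D) ℂ,
      X' ∈ Matrix.unitaryGroup (Fin D) ℂ ∧ X' * Z' = -(Z' * X')) :
    Module.finrank ℂ (Module.End.eigenspace (Matrix.toLin' Z') 1) =
      Module.finrank ℂ (Module.End.eigenspace (Matrix.toLin' Z') (-1)) ∧
    D = 2 * Module.finrank ℂ (Module.End.eigenspace (Matrix.toLin' Z') 1) := by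
  obtain ⟨X', hXu, hXZ⟩ := hX
  have hZ : toLin' Z' * toLin' Z' = 1 := by
    rw [End.mul_eq_comp, ← toLin'_mul, hZ2, toLin'_one, End.one_eq_id]
  have hanti : toLin' X' * toLin' Z' = -(toLin' Z' * toLin' X') := by
    rw [End.mul_eq_comp, End.mul_eq_comp, ← toLin'_mul, ← toLin'_mul, hXZ, map_neg]
  have hX_inj : Function.Injective (toLin' X') := by
    rw [toLin'_apply', coe_mulVecLin]
    exact mulVec_injective_iff_isUnit.mpr (Unitary.isUnit_coe (U := ⟨X', hXu⟩))
  have heq := End.finrank_eigenspace_neg_eq_of_mul_eq_neg hanti hX_inj 1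
  have hsum := End.finrank_eigenspace_one_add_finrank_eigenspace_neg_one two_ne_zero hZ
  rw [finrank_fin_fun] at hsum
  omega

/-- if `Z'` is Hermitian, squares to the identity, and anticommutes with some
unitary `X'`, then its `+1` and `-1` eigenspaces have the same finite dimension, and
`D` is twice that dimension. -/
theorem eigenspaces_of_anticommuting_involution (D : ℕ) (Z' : Matrix (Fin D) (Fin D) ℂ)
    (hZherm : Z'.IsHermitian) (hZ2 : Z' * Z' = 1)
    (hX : ∃ X' : Matrix (Fin D) (Fin D) ℂ,
      X' ∈ Matrix.unitaryGroup (Fin D) ℂ ∧ X' * Z' = -(Z' * X')) :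
    Module.finrank ℂ (Module.End.eigenspace (Matrix.toLin' Z') 1) =
      Module.finrank ℂ (Module.End.eigenspace (Matrix.toLin' Z') (-1)) ∧
    D = 2 * Module.finrank ℂ (Module.End.eigenspace (Matrix.toLin' Z') 1) :=
  eigenspaces_of_anticommuting_involution_general D Z' hZ2 hX
end

section
/- Let V and W be complex vector spaces, let u ∈ V and v ∈ W be nonzero vectors, and let A : V →ₗ[ℂ] V and B : W →ₗ[ℂ] W be linear maps such that (TensorProduct.map A B)(u ⊗ₜ v) = u ⊗ₜ v. Then there exists a nonzero scalar λ ∈ ℂ with A u = λ • u and B v = λ⁻¹ • v. -/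
open scoped TensorProduct

/-!
Contracting `u ⊗ v` with a functional `φ` satisfying `φ u = 1` recovers `v`. Applied to
`A u ⊗ B v = u ⊗ v`, contracting on either side shows `B v = φ (A u)⁻¹ • v` and
`A u = ψ (B v)⁻¹ • u`, where `ψ v = 1`; applying `ψ` to the first identity gives
`φ (A u) * ψ (B v) = 1`.
-/

namespace TensorProduct

variable {K V W : Type*} [Field K] [AddCommGroup V] [Module K V] [AddCommGroup W] [Module K W]

theorem smul_eq_of_tmul_eq_tmul_of_dual_apply_eq_one {x u : V} {y v : W}
    (φ : Module.Dual K V) (hφ : φ u = 1) (h : x ⊗ₜ[K] y = u ⊗ₜ[K] v) : φ x • y = v := by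
  simpa [hφ] using congrArg (TensorProduct.lid K W ∘ φ.rTensor W) h

theorem exists_smul_of_tmul_eq_tmul {x u : V} {y v : W} (hu : u ≠ 0) (hv : v ≠ 0)
    (h : x ⊗ₜ[K] y = u ⊗ₜ[K] v) : ∃ c : K, c ≠ 0 ∧ x = c • u ∧ y = c⁻¹ • v := by
  obtain ⟨φ, hφ⟩ := Module.Projective.exists_dual_eq_one K hu
  obtain ⟨ψ, hψ⟩ := Module.Projective.exists_dual_eq_one K hv
  have hy : φ x • y = v := smul_eq_of_tmul_eq_tmul_of_dual_apply_eq_one φ hφ h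
  have hx : ψ y • x = u := smul_eq_of_tmul_eq_tmul_of_dual_apply_eq_one ψ hψ
    (by simpa using congrArg (TensorProduct.comm K V W) h)
  have hprod : φ x * ψ y = 1 := by simpa [hψ] using congrArg ψ hy
  refine ⟨φ x, left_ne_zero_of_mul_eq_one hprod, ?_, ?_⟩
  · rw [← hx, smul_smul, hprod, one_smul]
  · rw [← hy, smul_smul, inv_mul_cancel₀ (left_ne_zero_of_mul_eq_one hprod), one_smul]

end TensorProduct

/-- a nonzero product vector fixed by `A ⊗ B` is an eigenvector of each factor,
with eigenvalues `λ` and `λ⁻¹`. -/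
theorem product_vector_fixed_by_tensor_map {V W : Type*}
    [AddCommGroup V] [Module ℂ V] [AddCommGroup W] [Module ℂ W]
    (u : V) (v : W) (hu : u ≠ 0) (hv : v ≠ 0)
    (A : V →ₗ[ℂ] V) (B : W →ₗ[ℂ] W)
    (h : TensorProduct.map A B (u ⊗ₜ[ℂ] v) = u ⊗ₜ[ℂ] v) :
    ∃ l : ℂ, l ≠ 0 ∧ A u = l • u ∧ B v = l⁻¹ • v :=
  TensorProduct.exists_smul_of_tmul_eq_tmul hu hv (by rwa [TensorProduct.map_tmul] at h)
end

section
/- Let V and W be complex vector spaces, let u ∈ V and v ∈ W be nonzero vectors, and let (A i : V →ₗ[ℂ] V) and (B i : W →ₗ[ℂ] W) be families of linear maps indexed by i ∈ ι such that (TensorProduct.map (A i) (B i))(u ⊗ₜ v) = u ⊗ₜ v for every i. If there exist indices i ≠ j with A i ∘ A j + A j ∘ A i = 0, then we obtain a contradiction (False): no such nonzero product vector can be fixed by all the operators. -/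
open scoped TensorProduct

/-
Contracting the second factor against a functional `f` with `f v = 1` turns
`A i u ⊗ B i v = u ⊗ v` into `f (B i v) • A i u = u`, so `u` is an eigenvector of every `A i` with
a nonzero eigenvalue. Two anticommuting maps with a common eigenvector `u` and eigenvalues `a`, `b`
give `2ab • u = 0`, forcing `a = 0` or `b = 0`.
-/

namespace TensorProduct

variable {K V W : Type*} [Field K] [AddCommGroup V] [Module K V] [AddCommGroup W] [Module K W]

theorem exists_ne_zero_smul_eq_of_tmul_eq_tmul {x x' : V} {y y' : W} (hx : x ≠ 0) (hy : y ≠ 0)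
    (h : x' ⊗ₜ[K] y' = x ⊗ₜ y) : ∃ c : K, c ≠ 0 ∧ x' = c • x := by
  obtain ⟨f, hf⟩ := Module.Projective.exists_dual_eq_one K hy
  have contract : f y' • x' = x := by
    simpa [hf] using congrArg ((TensorProduct.rid K V).toLinearMap ∘ₗ LinearMap.lTensor V f) h
  have hfy' : f y' ≠ 0 := by
    rintro h0
    exact hx (by rw [← contract, h0, zero_smul])
  exact ⟨(f y')⁻¹, inv_ne_zero hfy', by rw [← contract, inv_smul_smul₀ hfy']⟩

end TensorProduct

namespace LinearMap

theorem mul_eq_zero_of_anticommute_of_apply_eq_smul {K V : Type*} [Field K] [NeZero (2 : K)]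
    [AddCommGroup V] [Module K V] {S T : V →ₗ[K] V} (hST : S ∘ₗ T + T ∘ₗ S = 0)
    {x : V} (hx : x ≠ 0) {a b : K} (hS : S x = a • x) (hT : T x = b • x) : a * b = 0 := by
  have h : (2 * (a * b)) • x = 0 := by
    have := congrArg (· x) hST
    simp only [add_apply, comp_apply, zero_apply, hS, hT, map_smul, smul_smul] at this
    linear_combination (norm := module) this
  simpa [hx, NeZero.ne (2 : K)] using h

end LinearMap

/-- no nonzero product vector can be fixed by a family of product operators
`A i ⊗ B i` two of whose first factors anticommute. -/
theorem no_product_vector_fixed_by_anticommuting_family {ι : Type*} {V W : Type*}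
    [AddCommGroup V] [Module ℂ V] [AddCommGroup W] [Module ℂ W]
    (u : V) (v : W) (hu : u ≠ 0) (hv : v ≠ 0)
    (A : ι → (V →ₗ[ℂ] V)) (B : ι → (W →ₗ[ℂ] W))
    (hfix : ∀ i, TensorProduct.map (A i) (B i) (u ⊗ₜ[ℂ] v) = u ⊗ₜ[ℂ] v)
    (hanti : ∃ i j, i ≠ j ∧ A i ∘ₗ A j + A j ∘ₗ A i = 0) :
    False := by
  have eigen : ∀ i, ∃ c : ℂ, c ≠ 0 ∧ A i u = c • u := fun i =>
    TensorProduct.exists_ne_zero_smul_eq_of_tmul_eq_tmul hu hv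
      (by simpa only [TensorProduct.map_tmul] using hfix i)
  obtain ⟨i, j, -, hij⟩ := hanti
  obtain ⟨a, ha, hAi⟩ := eigen i
  obtain ⟨b, hb, hAj⟩ := eigen j
  exact mul_ne_zero ha hb (LinearMap.mul_eq_zero_of_anticommute_of_apply_eq_smul hij hu hAi hAj)
end

section
/- For each k : Fin N let V k be a finite-dimensional complex vector space, and for i : ι let f i : (k : Fin N) → (V k →ₗ[ℂ] V k) be families of local operators, with induced endomorphisms S i = PiTensorProduct.map (f i) on T = ⨂[ℂ] k, V k and, for G ⊆ Fin N, restricted endomorphisms S_G i = PiTensorProduct.map (fun k : G => f i k) on T_G = ⨂[ℂ] (k : G), V k. Suppose that for every subset G of Fin N with G ≠ ∅ and G ≠ univ there exist i ≠ j with S_G i ∘ S_G j = −(S_G j ∘ S_G i). Then for every such G there do not exist nonzero u ∈ T_G and v ∈ T_{Gᶜ} such that the vector e_G (u ⊗ₜ v) is fixed by S i for every i, where e_G : T_G ⊗ T_{Gᶜ} ≃ₗ[ℂ] T is the canonical linear equivalence; that is, the subspace of vectors fixed by all S i is genuinely multipartite entangled. -/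
/-!
Since `e_G` splits pure tensors, `S i ∘ e_G = e_G ∘ (S_G i ⊗ S_{Gᶜ} i)`. So if `e_G (u ⊗ v)` is
fixed by every `S i`, then `S_G i u ⊗ S_{Gᶜ} i v = u ⊗ v`, which for nonzero `u`, `v` forces
`S_G i u = c • u` with `c ≠ 0`. But a common eigenvector `u` of two anticommuting operators with
eigenvalues `a`, `b` satisfies `a b u = -a b u`, so `a b = 0`.
-/

open scoped TensorProduct
open scoped Classical

theorem TensorProduct.exists_smul_eq_of_tmul_eq_tmul {K M N : Type*} [Field K]
    [AddCommGroup M] [Module K M] [AddCommGroup N] [Module K N]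
    {u u' : M} {v v' : N} (hu : u ≠ 0) (hv : v ≠ 0) (h : u' ⊗ₜ[K] v' = u ⊗ₜ[K] v) :
    ∃ c : K, c ≠ 0 ∧ u' = c • u := by
  obtain ⟨φ, hφ⟩ := Module.Projective.exists_dual_eq_one K hv
  have hcontract : φ v' • u' = u := by
    simpa [hφ] using congrArg ((TensorProduct.rid K M).toLinearMap ∘ₗ LinearMap.lTensor M φ) h
  have hφv' : φ v' ≠ 0 := by
    intro h0
    exact hu (by simpa [h0] using hcontract.symm)
  exact ⟨(φ v')⁻¹, inv_ne_zero hφv', by rw [← hcontract, smul_smul, inv_mul_cancel₀ hφv', one_smul]⟩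

theorem LinearMap.mul_eq_zero_of_anticommute_of_apply_eq_smul_s4 {K M : Type*} [Field K]
    [AddCommGroup M] [Module K M] (h2 : (2 : K) ≠ 0) {A B : M →ₗ[K] M} (hAB : A ∘ₗ B = -(B ∘ₗ A))
    {u : M} (hu : u ≠ 0) {a b : K} (ha : A u = a • u) (hb : B u = b • u) : a * b = 0 := by
  have hself : (a * b) • u = -((a * b) • u) := by
    simpa [ha, hb, smul_smul, mul_comm a b] using LinearMap.congr_fun hAB u
  have htwice : ((2 : K) * (a * b)) • u = 0 := by
    rw [two_mul, add_smul]; nth_rewrite 1 [hself]; exact neg_add_cancel _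
  simpa [h2, hu] using htwice

theorem PiTensorProduct.map_apply_of_tprod_split {R ι : Type*} [CommRing R]
    {V : ι → Type*} [∀ k, AddCommGroup (V k)] [∀ k, Module R (V k)] {G : Set ι}
    (e : ((⨂[R] k : G, V k) ⊗[R] (⨂[R] k : (Gᶜ : Set ι), V k)) ≃ₗ[R] (⨂[R] k, V k))
    (he : ∀ (a : (k : G) → V k) (b : (k : (Gᶜ : Set ι)) → V k),
      e (tprod R a ⊗ₜ[R] tprod R b) = tprod R fun k => if h : k ∈ G then a ⟨k, h⟩ else b ⟨k, h⟩)
    (g : (k : ι) → V k →ₗ[R] V k) (x : (⨂[R] k : G, V k) ⊗[R] (⨂[R] k : (Gᶜ : Set ι), V k)) :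
    map g (e x) =
      e (TensorProduct.map (map fun k : G => g k) (map fun k : (Gᶜ : Set ι) => g k) x) := by
  suffices map g ∘ₗ e.toLinearMap = e.toLinearMap ∘ₗ TensorProduct.map (map fun k : G => g k)
      (map fun k : (Gᶜ : Set ι) => g k) from LinearMap.congr_fun this x
  ext a b
  simp [he, map_tprod, apply_dite]

theorem stabilized_subspace_genuinely_entangled_general {N : ℕ} {ι : Type*}
    (V : Fin N → Type*) [∀ k, AddCommGroup (V k)] [∀ k, Module ℂ (V k)]
    (f : ι → (k : Fin N) → (V k →ₗ[ℂ] V k))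
    (hanti : ∀ G : Set (Fin N), G ≠ ∅ → G ≠ Set.univ →
      ∃ i j : ι, i ≠ j ∧
        (PiTensorProduct.map fun k : G => f i k) ∘ₗ (PiTensorProduct.map fun k : G => f j k) =
          -((PiTensorProduct.map fun k : G => f j k) ∘ₗ
            (PiTensorProduct.map fun k : G => f i k))) :
    ∀ G : Set (Fin N), G ≠ ∅ → G ≠ Set.univ →
      ∀ eG : ((⨂[ℂ] k : G, V k) ⊗[ℂ] (⨂[ℂ] k : (Gᶜ : Set (Fin N)), V k)) ≃ₗ[ℂ] (⨂[ℂ] k, V k),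
        (∀ (a : (k : G) → V k) (b : (k : (Gᶜ : Set (Fin N))) → V k),
          eG (PiTensorProduct.tprod ℂ a ⊗ₜ[ℂ] PiTensorProduct.tprod ℂ b) =
            PiTensorProduct.tprod ℂ fun k : Fin N =>
              if h : k ∈ G then a ⟨k, h⟩ else b ⟨k, h⟩) →
        ¬∃ (u : ⨂[ℂ] k : G, V k) (v : ⨂[ℂ] k : (Gᶜ : Set (Fin N)), V k),
            u ≠ 0 ∧ v ≠ 0 ∧
            ∀ i : ι, PiTensorProduct.map (f i) (eG (u ⊗ₜ[ℂ] v)) = eG (u ⊗ₜ[ℂ] v) := by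
  rintro G hG hG' eG heG ⟨u, v, hu, hv, hfix⟩
  have heigen (i : ι) : ∃ c : ℂ, c ≠ 0 ∧ (PiTensorProduct.map fun k : G => f i k) u = c • u := by
    refine TensorProduct.exists_smul_eq_of_tmul_eq_tmul hu hv
      (v' := (PiTensorProduct.map fun k : (Gᶜ : Set (Fin N)) => f i k) v) (eG.injective ?_)
    rw [← hfix i, PiTensorProduct.map_apply_of_tprod_split eG heG, TensorProduct.map_tmul]
  obtain ⟨i, j, -, hij⟩ := hanti G hG hG'
  obtain ⟨a, ha, hua⟩ := heigen i
  obtain ⟨b, hb, hub⟩ := heigen j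
  exact mul_ne_zero ha hb
    (LinearMap.mul_eq_zero_of_anticommute_of_apply_eq_smul_s4 two_ne_zero hij hu hua hub)

/-- Fact 3: if for every nontrivial bipartition `G|Gᶜ` of the sites two of the
local-operator families anticommute when restricted to `G`, then the subspace of vectors fixed
by all the induced endomorphisms `S i` contains no (nonzero) product vector across any
nontrivial bipartition, i.e. it is genuinely multipartite entangled. -/
theorem stabilized_subspace_genuinely_entangled {N : ℕ} {ι : Type*}
    (V : Fin N → Type*) [∀ k, AddCommGroup (V k)] [∀ k, Module ℂ (V k)]
    [∀ k, FiniteDimensional ℂ (V k)]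
    (f : ι → (k : Fin N) → (V k →ₗ[ℂ] V k))
    (hanti : ∀ G : Set (Fin N), G ≠ ∅ → G ≠ Set.univ →
      ∃ i j : ι, i ≠ j ∧
        (PiTensorProduct.map fun k : G => f i k) ∘ₗ (PiTensorProduct.map fun k : G => f j k) =
          -((PiTensorProduct.map fun k : G => f j k) ∘ₗ
            (PiTensorProduct.map fun k : G => f i k))) :
    ∀ G : Set (Fin N), G ≠ ∅ → G ≠ Set.univ →
      ∀ eG : ((⨂[ℂ] k : G, V k) ⊗[ℂ] (⨂[ℂ] k : (Gᶜ : Set (Fin N)), V k)) ≃ₗ[ℂ] (⨂[ℂ] k, V k),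
        (∀ (a : (k : G) → V k) (b : (k : (Gᶜ : Set (Fin N))) → V k),
          eG (PiTensorProduct.tprod ℂ a ⊗ₜ[ℂ] PiTensorProduct.tprod ℂ b) =
            PiTensorProduct.tprod ℂ fun k : Fin N =>
              if h : k ∈ G then a ⟨k, h⟩ else b ⟨k, h⟩) →
        ¬∃ (u : ⨂[ℂ] k : G, V k) (v : ⨂[ℂ] k : (Gᶜ : Set (Fin N)), V k),
            u ≠ 0 ∧ v ≠ 0 ∧
            ∀ i : ι, PiTensorProduct.map (f i) (eG (u ⊗ₜ[ℂ] v)) = eG (u ⊗ₜ[ℂ] v) :=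
  stabilized_subspace_genuinely_entangled_general V f hanti
end

section
/- Let V and W be complex vector spaces and A, C : V →ₗ[ℂ] V, B, D : W →ₗ[ℂ] W linear maps. Suppose A ∘ C = −(C ∘ A), C ∘ A ≠ 0, and the operators TensorProduct.map A B and TensorProduct.map C D on V ⊗ W commute. Then B ∘ D = −(D ∘ B). -/
open scoped TensorProduct

/-!
Since `A ∘ C = -(C ∘ A)`, the relation `(A ⊗ B)(C ⊗ D) = (C ⊗ D)(A ⊗ B)` reads
`-(CA ⊗ BD) = CA ⊗ DB`, that is `CA ⊗ (BD + DB) = 0`. Over a field a nonzero vector `x` has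
a functional `φ` with `φ x = 1`, and applying `φ ⊗ id` shows that `x ⊗ y = 0` forces `y = 0`.
So a tensor product of maps vanishes only if one factor does, and `CA ≠ 0` gives `BD + DB = 0`.
-/

namespace TensorProduct

section CommRing

variable {R M N : Type*} [CommRing R] [AddCommGroup M] [Module R M]
  [AddCommGroup N] [Module R N]

theorem map_neg_left {P Q : Type*} [AddCommGroup P] [Module R P] [AddCommGroup Q] [Module R Q]
    (f : M →ₗ[R] P) (g : N →ₗ[R] Q) : map (-f) g = -map f g :=
  (mapBilinear (RingHom.id R) M N P Q).map_neg₂ f g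

theorem map_comp_anticommutator_eq_zero {A C : M →ₗ[R] M} {B D : N →ₗ[R] N}
    (hAC : A ∘ₗ C = -(C ∘ₗ A)) (hcomm : map A B ∘ₗ map C D = map C D ∘ₗ map A B) :
    map (C ∘ₗ A) (B ∘ₗ D + D ∘ₗ B) = 0 := by
  rw [map_add_right, map_comp C D A B, ← hcomm, ← map_comp, hAC, map_neg_left,
    add_neg_cancel]

end CommRing

section Semifield

variable {K M N : Type*} [Semifield K] [AddCommMonoid M] [Module K M]
  [AddCommMonoid N] [Module K N]

theorem eq_zero_of_tmul_eq_zero_of_ne_zero [Module.Projective K M] {x : M} {y : N} (hx : x ≠ 0)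
    (h : x ⊗ₜ[K] y = 0) : y = 0 := by
  obtain ⟨φ, hφ⟩ := Module.Projective.exists_dual_eq_one K hx
  simpa [hφ] using congrArg (fun t ↦ TensorProduct.lid K N (φ.rTensor N t)) h

theorem eq_zero_of_map_eq_zero_of_ne_zero {P Q : Type*} [AddCommMonoid P] [Module K P]
    [AddCommMonoid Q] [Module K Q] [Module.Projective K P] {f : M →ₗ[K] P} {g : N →ₗ[K] Q}
    (hf : f ≠ 0) (h : map f g = 0) : g = 0 := by
  obtain ⟨x, hx⟩ : ∃ x, f x ≠ 0 := not_forall.mp fun hf' ↦ hf (LinearMap.ext hf')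
  ext y
  exact eq_zero_of_tmul_eq_zero_of_ne_zero hx (by simpa using LinearMap.congr_fun h (x ⊗ₜ y))

end Semifield

end TensorProduct

/-- if `A ⊗ B` and `C ⊗ D` commute while `A` and `C` anticommute
(with `C ∘ A ≠ 0`), then `B` and `D` anticommute. -/
theorem second_factors_anticommute {V W : Type*}
    [AddCommGroup V] [Module ℂ V] [AddCommGroup W] [Module ℂ W]
    (A C : V →ₗ[ℂ] V) (B D : W →ₗ[ℂ] W)
    (hAC : A ∘ₗ C = -(C ∘ₗ A)) (hCA : C ∘ₗ A ≠ 0)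
    (hcomm : TensorProduct.map A B ∘ₗ TensorProduct.map C D =
      TensorProduct.map C D ∘ₗ TensorProduct.map A B) :
    B ∘ₗ D = -(D ∘ₗ B) :=
  eq_neg_of_add_eq_zero_left <| TensorProduct.eq_zero_of_map_eq_zero_of_ne_zero hCA <|
    TensorProduct.map_comp_anticommutator_eq_zero hAC hcomm
end

section
/- Let f₁ = ![X, Z, Z, X, 1], f₂ = ![1, X, Z, Z, X], f₃ = ![X, 1, X, Z, Z], f₄ = ![Z, X, 1, X, Z] be the Pauli strings of the five-qubit code stabilizers, each f i : Fin 5 → Matrix (Fin 2) (Fin 2) ℂ. For a subset G ⊆ Fin 5, let S_G i denote the endomorphism PiTensorProduct.map (fun k : G => Matrix.toLin' (f i k)) of ⨂[ℂ] (k : G), ℂ². Then for every subset G of Fin 5 with G ≠ ∅ and G ≠ univ, there exist indices i ≠ j in Fin 4 (i.e. among the four stabilizers) such that S_G i ∘ S_G j = −(S_G j ∘ S_G i). -/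
/-!
Two Pauli strings commute up to the sign `(-1)^m`, where `m` counts the sites carrying two
distinct non-identity factors (`X` and `Z` anticommute, all other pairs commute), and the
signs of the factors multiply under `PiTensorProduct.map`. So the restrictions of two
stabilizers to `G` anticommute as soon as an odd number of such sites lies in `G`, and a finite
check shows that every nonempty proper `G` admits such a pair of stabilizers.
-/

open scoped TensorProduct

namespace FiveQubitCode

/-- The Pauli matrix X. -/
def X : Matrix (Fin 2) (Fin 2) ℂ := !![0, 1; 1, 0]

/-- The Pauli matrix Z. -/
def Z : Matrix (Fin 2) (Fin 2) ℂ := !![1, 0; 0, -1]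

/-- The Pauli strings of the four stabilizers of the five-qubit code. -/
def f : Fin 4 → Fin 5 → Matrix (Fin 2) (Fin 2) ℂ :=
  ![![X, Z, Z, X, 1], ![1, X, Z, Z, X], ![X, 1, X, Z, Z], ![Z, X, 1, X, Z]]

end FiveQubitCode

namespace PiTensorProduct

section CommSemiring

variable {ι R : Type*} [Fintype ι] [CommSemiring R] {s t : ι → Type*}
  [∀ i, AddCommMonoid (s i)] [∀ i, Module R (s i)] [∀ i, AddCommMonoid (t i)] [∀ i, Module R (t i)]

theorem map_smul_univ (c : ι → R) (g : Π i, s i →ₗ[R] t i) :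
    map (fun i ↦ c i • g i) = (∏ i, c i) • map g := by
  ext x
  simp [MultilinearMap.map_smul_univ]

theorem map_comp_map_eq_prod_smul (c : ι → R) (g h : Π i, s i →ₗ[R] s i)
    (hgh : ∀ i, g i ∘ₗ h i = c i • (h i ∘ₗ g i)) :
    map g ∘ₗ map h = (∏ i, c i) • (map h ∘ₗ map g) := by
  simp only [← map_comp, hgh, map_smul_univ]

end CommSemiring

theorem map_comp_map_eq_neg {ι R : Type*} [Fintype ι] [CommRing R] {s : ι → Type*}
    [∀ i, AddCommGroup (s i)] [∀ i, Module R (s i)] (c : ι → R) (g h : Π i, s i →ₗ[R] s i)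
    (hgh : ∀ i, g i ∘ₗ h i = c i • (h i ∘ₗ g i)) (hc : ∏ i, c i = -1) :
    map g ∘ₗ map h = -(map h ∘ₗ map g) := by
  rw [map_comp_map_eq_prod_smul c g h hgh, hc]
  exact neg_one_smul R (map h ∘ₗ map g)

end PiTensorProduct

theorem Finset.prod_ite_neg_one_one {ι R : Type*} [CommRing R] (s : Finset ι) (p : ι → Prop)
    [DecidablePred p] :
    ∏ i ∈ s, (if p i then -1 else 1 : R) = (-1) ^ (s.filter p).card := by
  simp [Finset.prod_ite]

namespace FiveQubitCode

def pauli : Fin 3 → Matrix (Fin 2) (Fin 2) ℂ := ![1, X, Z]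

def pauliAnticommute (a b : Fin 3) : Bool := a ≠ 0 && b ≠ 0 && a ≠ b

theorem X_mul_Z : X * Z = -(Z * X) := by
  ext a b
  fin_cases a <;> fin_cases b <;> simp [X, Z, Matrix.mul_apply]

theorem pauli_mul_pauli (a b : Fin 3) :
    pauli a * pauli b = (if pauliAnticommute a b then (-1 : ℂ) else 1) • (pauli b * pauli a) := by
  fin_cases a <;> fin_cases b <;> simp [pauli, pauliAnticommute, X_mul_Z]

def stabilizerLabel : Fin 4 → Fin 5 → Fin 3 :=
  ![![1, 2, 2, 1, 0], ![0, 1, 2, 2, 1], ![1, 0, 1, 2, 2], ![2, 1, 0, 1, 2]]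

theorem f_eq_pauli (i : Fin 4) (k : Fin 5) : f i k = pauli (stabilizerLabel i k) := by
  fin_cases i <;> fin_cases k <;> rfl

theorem exists_odd_card_anticommuting (s : Finset (Fin 5)) (hs : s.Nonempty)
    (hs' : s ≠ Finset.univ) :
    ∃ i j : Fin 4, i ≠ j ∧
      Odd (s.filter fun k ↦ pauliAnticommute (stabilizerLabel i k) (stabilizerLabel j k)).card := by
  revert s
  decide

/-- for every nontrivial subset `G` of the five sites, two of the five-qubit-code
stabilizers anticommute when restricted (as endomorphisms of `⨂_{k ∈ G} ℂ²`) to `G`. -/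
theorem restricted_stabilizers_anticommute :
    ∀ G : Set (Fin 5), G ≠ ∅ → G ≠ Set.univ →
      ∃ i j : Fin 4, i ≠ j ∧
        (PiTensorProduct.map fun k : G => Matrix.toLin' (f i k)) ∘ₗ
            (PiTensorProduct.map fun k : G => Matrix.toLin' (f j k)) =
          -((PiTensorProduct.map fun k : G => Matrix.toLin' (f j k)) ∘ₗ
            (PiTensorProduct.map fun k : G => Matrix.toLin' (f i k))) := by
  classical
  intro G hG hG'
  obtain ⟨i, j, hij, hodd⟩ := exists_odd_card_anticommuting G.toFinset
    (Set.toFinset_nonempty.2 (Set.nonempty_iff_ne_empty.2 hG)) (mt Set.toFinset_eq_univ.1 hG')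
  set ε : Fin 5 → ℂ := fun k ↦
    if pauliAnticommute (stabilizerLabel i k) (stabilizerLabel j k) then -1 else 1
  have hcomm (k : G) : Matrix.toLin' (f i k) ∘ₗ Matrix.toLin' (f j k) =
      ε k • (Matrix.toLin' (f j k) ∘ₗ Matrix.toLin' (f i k)) := by
    rw [← Matrix.toLin'_mul, ← Matrix.toLin'_mul, f_eq_pauli, f_eq_pauli, pauli_mul_pauli,
      map_smul]
  refine ⟨i, j, hij, PiTensorProduct.map_comp_map_eq_neg _ _ _ hcomm ?_⟩
  rw [Finset.prod_set_coe (f := ε), Finset.prod_ite_neg_one_one, hodd.neg_one_pow]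

end FiveQubitCode
end

section
/- Let H be a complex inner product space and let A : Fin 5 → Fin 2 → (H →ₗ[ℂ] H) satisfy: (A i x) ∘ (A i x) = id for all i, x, and A i x commutes with A j y whenever i ≠ j. Define X'₁ = (A 1 0 + A 1 1)/√2, Z'₁ = (A 1 0 − A 1 1)/√2, and X'ᵢ = A i 0, Z'ᵢ = A i 1 for sites i = 2,…,5; set S'₁ = X'₁Z'₂Z'₃X'₄, S'₂ = X'₂Z'₃Z'₄X'₅, S'₃ = X'₁X'₃Z'₄Z'₅, S'₄ = Z'₁X'₂X'₄Z'₅, and the Bell operator B₅ = √2·S'₁ + S'₂ + √2·S'₃ + 2√2·S'₄. Then the operator identity (1 + 4√2)·id − B₅ = (1/√2)·(id − S'₁)² + (1/2)·(id − S'₂)² + (1/√2)·(id − S'₃)² + √2·(id − S'₄)² holds. -/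
/-!
Expanding `(1 - S)² = 1 - 2S + S²`, the linear terms of the right-hand side reproduce the Bell
operator, so only the squares `S'ₖ²` matter. Observables at different sites commute and every
observable away from the first site squares to `1`, so `S'ₖ²` is the square of its first-site
factor: `X'₁² = 1 + {A₁₀, A₁₁}/2` and `Z'₁² = 1 - {A₁₀, A₁₁}/2`. With the weights
`1/√2, 1/2, 1/√2, √2` the anticommutator terms cancel and the constants add up to `1 + 4√2`.
-/

noncomputable section

namespace BellI5

variable {H : Type*} [NormedAddCommGroup H] [InnerProductSpace ℂ H]

/-- The effective `X` observable at each site (site `0` plays the special role). -/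
def Xop (A : Fin 5 → Fin 2 → Module.End ℂ H) (i : Fin 5) : Module.End ℂ H :=
  if i = 0 then (Real.sqrt 2 : ℂ)⁻¹ • (A 0 0 + A 0 1) else A i 0

/-- The effective `Z` observable at each site (site `0` plays the special role). -/
def Zop (A : Fin 5 → Fin 2 → Module.End ℂ H) (i : Fin 5) : Module.End ℂ H :=
  if i = 0 then (Real.sqrt 2 : ℂ)⁻¹ • (A 0 0 - A 0 1) else A i 1

/-- The four operators `S'₁, S'₂, S'₃, S'₄` built from the measurement observables. -/
def S (A : Fin 5 → Fin 2 → Module.End ℂ H) : Fin 4 → Module.End ℂ H :=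
  ![Xop A 0 * Zop A 1 * Zop A 2 * Xop A 3,
    Xop A 1 * Zop A 2 * Zop A 3 * Xop A 4,
    Xop A 0 * Xop A 2 * Zop A 3 * Zop A 4,
    Zop A 0 * Xop A 1 * Xop A 3 * Zop A 4]

/-- The Bell operator `B₅ = √2·S'₁ + S'₂ + √2·S'₃ + 2√2·S'₄`. -/
def Bell (A : Fin 5 → Fin 2 → Module.End ℂ H) : Module.End ℂ H :=
  (Real.sqrt 2 : ℂ) • S A 0 + S A 1 + (Real.sqrt 2 : ℂ) • S A 2 +
    ((2 * Real.sqrt 2 : ℝ) : ℂ) • S A 3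

theorem sq_mul_mul_mul_of_commute {M : Type*} [Monoid M] {w x y z : M}
    (hwx : Commute w x) (hwy : Commute w y) (hwz : Commute w z)
    (hxy : Commute x y) (hxz : Commute x z) (hyz : Commute y z)
    (hx : x ^ 2 = 1) (hy : y ^ 2 = 1) (hz : z ^ 2 = 1) :
    (w * x * y * z) ^ 2 = w ^ 2 := by
  rw [((hwz.mul_left hxz).mul_left hyz).mul_pow, (hwy.mul_left hxy).mul_pow, hwx.mul_pow,
    hx, hy, hz, mul_one, mul_one, mul_one]

section Anticommutator

variable {K R : Type*} [Field K] [CharZero K] [Ring R] [Algebra K R]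
  {c : K} {a b : R}

theorem sq_inv_smul_add_of_sq_eq_two (hc : c ^ 2 = 2) (ha : a ^ 2 = 1) (hb : b ^ 2 = 1) :
    (c⁻¹ • (a + b)) ^ 2 = 1 + (2 : K)⁻¹ • (a * b + b * a) := by
  have hsq : (a + b) ^ 2 = 2 • 1 + (a * b + b * a) := by
    rw [sq] at ha hb
    rw [sq, add_mul, mul_add, mul_add, ha, hb]
    abel
  rw [smul_pow, inv_pow, hc, hsq]
  module

theorem sq_inv_smul_sub_of_sq_eq_two (hc : c ^ 2 = 2) (ha : a ^ 2 = 1) (hb : b ^ 2 = 1) :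
    (c⁻¹ • (a - b)) ^ 2 = 1 - (2 : K)⁻¹ • (a * b + b * a) := by
  have hsq : (a - b) ^ 2 = 2 • 1 - (a * b + b * a) := by
    rw [sq] at ha hb
    rw [sq, sub_mul, mul_sub, mul_sub, ha, hb]
    abel
  rw [smul_pow, inv_pow, hc, hsq]
  module

end Anticommutator

section Sites

variable {K R ι κ : Type*} [CommSemiring K] [Semiring R] [Algebra K R] {A : ι → κ → R}

theorem commute_of_mem_adjoin_range (hcomm : ∀ i j x y, i ≠ j → A i x * A j y = A j y * A i x)
    {i j : ι} (hij : i ≠ j) {P Q : R} (hP : P ∈ Algebra.adjoin K (Set.range (A i)))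
    (hQ : Q ∈ Algebra.adjoin K (Set.range (A j))) : Commute P Q := by
  refine Algebra.commute_of_mem_adjoin_of_forall_mem_commute hQ ?_
  rintro _ ⟨y, rfl⟩
  refine (Algebra.commute_of_mem_adjoin_of_forall_mem_commute hP ?_).symm
  rintro _ ⟨x, rfl⟩
  exact (hcomm i j x y hij).symm

theorem sq_mul_mul_mul_of_mem_adjoin_range
    (hcomm : ∀ i j x y, i ≠ j → A i x * A j y = A j y * A i x)
    {i j k l : ι} (hsites : [i, j, k, l].Nodup) {w x y z : R}
    (hw : w ∈ Algebra.adjoin K (Set.range (A i))) (hx : x ∈ Algebra.adjoin K (Set.range (A j)))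
    (hy : y ∈ Algebra.adjoin K (Set.range (A k))) (hz : z ∈ Algebra.adjoin K (Set.range (A l)))
    (hx2 : x ^ 2 = 1) (hy2 : y ^ 2 = 1) (hz2 : z ^ 2 = 1) :
    (w * x * y * z) ^ 2 = w ^ 2 := by
  simp only [List.nodup_cons, List.mem_cons, List.not_mem_nil, List.nodup_nil, not_or] at hsites
  obtain ⟨⟨hij, hik, hil, -⟩, ⟨hjk, hjl, -⟩, ⟨hkl, -⟩, -⟩ := hsites
  exact sq_mul_mul_mul_of_commute
    (commute_of_mem_adjoin_range hcomm hij hw hx) (commute_of_mem_adjoin_range hcomm hik hw hy)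
    (commute_of_mem_adjoin_range hcomm hil hw hz) (commute_of_mem_adjoin_range hcomm hjk hx hy)
    (commute_of_mem_adjoin_range hcomm hjl hx hz) (commute_of_mem_adjoin_range hcomm hkl hy hz)
    hx2 hy2 hz2

end Sites

theorem ofReal_sqrt_two_sq : ((Real.sqrt 2 : ℝ) : ℂ) ^ 2 = 2 := by
  rw [← Complex.ofReal_pow, Real.sq_sqrt zero_le_two, Complex.ofReal_ofNat]

theorem ofReal_sqrt_two_inv : ((Real.sqrt 2 : ℝ) : ℂ)⁻¹ = (2 : ℂ)⁻¹ * (Real.sqrt 2 : ℝ) := by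
  have h : Real.sqrt 2 ≠ 0 := by positivity
  field_simp
  norm_cast
  simp

theorem sos_identity_of_sq {R : Type*} [Ring R] [Algebra ℂ R] {s₀ s₁ s₂ s₃ C : R}
    (h₀ : s₀ ^ 2 = 1 + (2 : ℂ)⁻¹ • C) (h₁ : s₁ ^ 2 = 1) (h₂ : s₂ ^ 2 = 1 + (2 : ℂ)⁻¹ • C)
    (h₃ : s₃ ^ 2 = 1 - (2 : ℂ)⁻¹ • C) :
    ((1 + 4 * Real.sqrt 2 : ℝ) : ℂ) • (1 : R) - ((Real.sqrt 2 : ℂ) • s₀ + s₁ +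
        (Real.sqrt 2 : ℂ) • s₂ + ((2 * Real.sqrt 2 : ℝ) : ℂ) • s₃) =
      (Real.sqrt 2 : ℂ)⁻¹ • (1 - s₀) ^ 2 + (2 : ℂ)⁻¹ • (1 - s₁) ^ 2 +
        (Real.sqrt 2 : ℂ)⁻¹ • (1 - s₂) ^ 2 + (Real.sqrt 2 : ℂ) • (1 - s₃) ^ 2 := by
  have expand (s : R) : (1 - s) ^ 2 = 1 - 2 • s + s ^ 2 := by noncomm_ring
  simp only [expand, h₀, h₁, h₂, h₃, ofReal_sqrt_two_inv]
  push_cast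
  match_scalars <;> ring

section Observables

variable (A : Fin 5 → Fin 2 → Module.End ℂ H)

theorem Xop_mem_adjoin (i : Fin 5) : Xop A i ∈ Algebra.adjoin ℂ (Set.range (A i)) := by
  unfold Xop
  split_ifs with hi
  · subst hi
    exact Subalgebra.smul_mem _ (add_mem (Algebra.subset_adjoin (Set.mem_range_self 0))
      (Algebra.subset_adjoin (Set.mem_range_self 1))) _
  · exact Algebra.subset_adjoin (Set.mem_range_self 0)

theorem Zop_mem_adjoin (i : Fin 5) : Zop A i ∈ Algebra.adjoin ℂ (Set.range (A i)) := by
  unfold Zop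
  split_ifs with hi
  · subst hi
    exact Subalgebra.smul_mem _ (sub_mem (Algebra.subset_adjoin (Set.mem_range_self 0))
      (Algebra.subset_adjoin (Set.mem_range_self 1))) _
  · exact Algebra.subset_adjoin (Set.mem_range_self 1)

variable {A} (hsq : ∀ i x, A i x * A i x = 1)
include hsq

theorem Xop_sq_of_ne_zero {i : Fin 5} (hi : i ≠ 0) : Xop A i ^ 2 = 1 := by
  rw [Xop, if_neg hi, sq, hsq]

theorem Zop_sq_of_ne_zero {i : Fin 5} (hi : i ≠ 0) : Zop A i ^ 2 = 1 := by
  rw [Zop, if_neg hi, sq, hsq]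

theorem Xop_zero_sq : Xop A 0 ^ 2 = 1 + (2 : ℂ)⁻¹ • (A 0 0 * A 0 1 + A 0 1 * A 0 0) := by
  rw [Xop, if_pos rfl]
  exact sq_inv_smul_add_of_sq_eq_two ofReal_sqrt_two_sq (by rw [sq, hsq]) (by rw [sq, hsq])

theorem Zop_zero_sq : Zop A 0 ^ 2 = 1 - (2 : ℂ)⁻¹ • (A 0 0 * A 0 1 + A 0 1 * A 0 0) := by
  rw [Zop, if_pos rfl]
  exact sq_inv_smul_sub_of_sq_eq_two ofReal_sqrt_two_sq (by rw [sq, hsq]) (by rw [sq, hsq])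

variable (hcomm : ∀ i j x y, i ≠ j → A i x * A j y = A j y * A i x)
include hcomm

theorem S_zero_sq : S A 0 ^ 2 = 1 + (2 : ℂ)⁻¹ • (A 0 0 * A 0 1 + A 0 1 * A 0 0) := by
  rw [← Xop_zero_sq hsq]
  exact sq_mul_mul_mul_of_mem_adjoin_range hcomm (by decide) (Xop_mem_adjoin A 0)
    (Zop_mem_adjoin A 1) (Zop_mem_adjoin A 2) (Xop_mem_adjoin A 3)
    (Zop_sq_of_ne_zero hsq (by decide)) (Zop_sq_of_ne_zero hsq (by decide))
    (Xop_sq_of_ne_zero hsq (by decide))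

theorem S_one_sq : S A 1 ^ 2 = 1 := by
  rw [← Xop_sq_of_ne_zero hsq (i := 1) (by decide)]
  exact sq_mul_mul_mul_of_mem_adjoin_range hcomm (by decide) (Xop_mem_adjoin A 1)
    (Zop_mem_adjoin A 2) (Zop_mem_adjoin A 3) (Xop_mem_adjoin A 4)
    (Zop_sq_of_ne_zero hsq (by decide)) (Zop_sq_of_ne_zero hsq (by decide))
    (Xop_sq_of_ne_zero hsq (by decide))

theorem S_two_sq : S A 2 ^ 2 = 1 + (2 : ℂ)⁻¹ • (A 0 0 * A 0 1 + A 0 1 * A 0 0) := by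
  rw [← Xop_zero_sq hsq]
  exact sq_mul_mul_mul_of_mem_adjoin_range hcomm (by decide) (Xop_mem_adjoin A 0)
    (Xop_mem_adjoin A 2) (Zop_mem_adjoin A 3) (Zop_mem_adjoin A 4)
    (Xop_sq_of_ne_zero hsq (by decide)) (Zop_sq_of_ne_zero hsq (by decide))
    (Zop_sq_of_ne_zero hsq (by decide))

theorem S_three_sq : S A 3 ^ 2 = 1 - (2 : ℂ)⁻¹ • (A 0 0 * A 0 1 + A 0 1 * A 0 0) := by
  rw [← Zop_zero_sq hsq]
  exact sq_mul_mul_mul_of_mem_adjoin_range hcomm (by decide) (Zop_mem_adjoin A 0)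
    (Xop_mem_adjoin A 1) (Xop_mem_adjoin A 3) (Zop_mem_adjoin A 4)
    (Xop_sq_of_ne_zero hsq (by decide)) (Xop_sq_of_ne_zero hsq (by decide))
    (Zop_sq_of_ne_zero hsq (by decide))

end Observables

/-- the sum-of-squares decomposition
`(1 + 4√2)·id − B₅ = (1/√2)(id − S'₁)² + (1/2)(id − S'₂)² + (1/√2)(id − S'₃)² + √2(id − S'₄)²`
for dichotomic (`A i x² = id`) observables commuting across different sites. -/
theorem sos_decomposition (A : Fin 5 → Fin 2 → Module.End ℂ H)
    (hsq : ∀ i x, A i x * A i x = 1)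
    (hcomm : ∀ i j x y, i ≠ j → A i x * A j y = A j y * A i x) :
    ((1 + 4 * Real.sqrt 2 : ℝ) : ℂ) • (1 : Module.End ℂ H) - Bell A =
      (Real.sqrt 2 : ℂ)⁻¹ • (1 - S A 0) ^ 2 + (2 : ℂ)⁻¹ • (1 - S A 1) ^ 2 +
        (Real.sqrt 2 : ℂ)⁻¹ • (1 - S A 2) ^ 2 + (Real.sqrt 2 : ℂ) • (1 - S A 3) ^ 2 :=
  sos_identity_of_sq (S_zero_sq hsq hcomm) (S_one_sq hsq hcomm) (S_two_sq hsq hcomm)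
    (S_three_sq hsq hcomm)

end BellI5
end
end

section
/- Let H be a complex inner product space and let A : Fin 5 → Fin 2 → (H →ₗ[ℂ] H) satisfy: each A i x is self-adjoint (symmetric), (A i x) ∘ (A i x) = id, and A i x commutes with A j y whenever i ≠ j. Define X'₁ = (A 1 0 + A 1 1)/√2, Z'₁ = (A 1 0 − A 1 1)/√2, X'ᵢ = A i 0, Z'ᵢ = A i 1 for i = 2,…,5, S'₁ = X'₁Z'₂Z'₃X'₄, S'₂ = X'₂Z'₃Z'₄X'₅, S'₃ = X'₁X'₃Z'₄Z'₅, S'₄ = Z'₁X'₂X'₄Z'₅, and B₅ = √2·S'₁ + S'₂ + √2·S'₃ + 2√2·S'₄. Then for every vector φ ∈ H, the real part of ⟪φ, B₅ φ⟫ is at most (1 + 4√2)·‖φ‖². -/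
/-!
Substituting `X'₁, Z'₁` back in terms of `A 0 0, A 0 1` cancels the factors `√2`, and
`B₅ = S'₂ + A₀₀ (a + b) + A₀₁ (a - b)`, where `a = M₁ + M₃`, `b = 2 M₄` and the `Mₖ` are products of
observables at the other sites. A self-adjoint involution is an isometry, so after Cauchy–Schwarz
everything reduces to `‖a φ + b φ‖ + ‖a φ - b φ‖ ≤ 2√2 · 2‖φ‖`, which is the parallelogram law
(the CHSH argument); together with `⟪φ, S'₂ φ⟫ ≤ ‖φ‖²` this gives `1 + 4√2`.
-/

noncomputable section

open scoped InnerProductSpace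

open RCLike

section InnerProductSpace

theorem norm_add_add_norm_sub_sq_le (𝕜 : Type*) {E : Type*} [RCLike 𝕜] [NormedAddCommGroup E]
    [InnerProductSpace 𝕜 E] (a b : E) : (‖a + b‖ + ‖a - b‖) ^ 2 ≤ 4 * (‖a‖ ^ 2 + ‖b‖ ^ 2) := by
  nlinarith [parallelogram_law_with_norm 𝕜 a b, sq_nonneg (‖a + b‖ - ‖a - b‖)]

variable {𝕜 E : Type*} [RCLike 𝕜] [NormedAddCommGroup E] [InnerProductSpace 𝕜 E]

theorem LinearMap.IsSymmetric.norm_apply_of_mul_self_eq_one {T : E →ₗ[𝕜] E}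
    (hT : T.IsSymmetric) (hT2 : T * T = 1) (w : E) : ‖T w‖ = ‖w‖ := by
  have hTT : T (T w) = w := by simpa using LinearMap.congr_fun hT2 w
  have hsq : ‖T w‖ ^ 2 = ‖w‖ ^ 2 := by
    rw [← inner_self_eq_norm_sq (𝕜 := 𝕜), ← inner_self_eq_norm_sq (𝕜 := 𝕜), hT, hTT]
  exact (sq_eq_sq₀ (norm_nonneg _) (norm_nonneg _)).1 hsq

theorem re_inner_add_add_re_inner_sub_le {x y a b : E} {s r : ℝ}
    (hx : ‖x‖ ≤ s) (hy : ‖y‖ ≤ s) (ha : ‖a‖ ≤ r) (hb : ‖b‖ ≤ r) :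
    re ⟪x, a + b⟫_𝕜 + re ⟪y, a - b⟫_𝕜 ≤ 2 * √2 * r * s := by
  have hr : 0 ≤ r := (norm_nonneg a).trans ha
  have hsum : ‖a + b‖ + ‖a - b‖ ≤ 2 * √2 * r := by
    refine abs_le_of_sq_le_sq' ?_ (by positivity) |>.2
    have h2 : √2 ^ 2 = 2 := Real.sq_sqrt zero_le_two
    nlinarith [norm_add_add_norm_sub_sq_le 𝕜 a b, pow_le_pow_left₀ (norm_nonneg a) ha 2,
      pow_le_pow_left₀ (norm_nonneg b) hb 2]
  calc re ⟪x, a + b⟫_𝕜 + re ⟪y, a - b⟫_𝕜 ≤ ‖x‖ * ‖a + b‖ + ‖y‖ * ‖a - b‖ :=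
        add_le_add (re_inner_le_norm x _) (re_inner_le_norm y _)
    _ ≤ s * ‖a + b‖ + s * ‖a - b‖ := by gcongr
    _ = s * (‖a + b‖ + ‖a - b‖) := by ring
    _ ≤ s * (2 * √2 * r) := by gcongr; exact (norm_nonneg x).trans hx
    _ = 2 * √2 * r * s := by ring

end InnerProductSpace

namespace BellI5

variable {H : Type*} [NormedAddCommGroup H] [InnerProductSpace ℂ H]

theorem bell_eq (A : Fin 5 → Fin 2 → Module.End ℂ H) :
    Bell A = S A 1
      + A 0 0 * (A 1 1 * A 2 1 * A 3 0 + A 2 0 * A 3 1 * A 4 1 + (2 : ℂ) • (A 1 0 * A 3 0 * A 4 1))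
      + A 0 1 * (A 1 1 * A 2 1 * A 3 0 + A 2 0 * A 3 1 * A 4 1 - (2 : ℂ) • (A 1 0 * A 3 0 * A 4 1)) := by
  simp only [Bell, S, Xop, Zop, Matrix.cons_val, if_pos, Fin.isValue]
  simp only [smul_mul_assoc, mul_smul_comm, smul_smul, mul_add, add_mul, mul_sub, sub_mul,
    smul_add, smul_sub, mul_assoc]
  push_cast
  field_simp
  module

theorem quantum_bound_general (A : Fin 5 → Fin 2 → Module.End ℂ H)
    (hsa : ∀ i x (u v : H), ⟪A i x u, v⟫_ℂ = ⟪u, A i x v⟫_ℂ)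
    (hsq : ∀ i x, A i x * A i x = 1) :
    ∀ φ : H, (⟪φ, Bell A φ⟫_ℂ).re ≤ (1 + 4 * Real.sqrt 2) * ‖φ‖ ^ 2 := by
  intro φ
  have hA : ∀ i x (w : H), ‖A i x w‖ = ‖w‖ := fun i x =>
    LinearMap.IsSymmetric.norm_apply_of_mul_self_eq_one (hsa i x) (hsq i x)
  set a := (A 1 1 * A 2 1 * A 3 0 + A 2 0 * A 3 1 * A 4 1) φ
  set b := ((2 : ℂ) • (A 1 0 * A 3 0 * A 4 1)) φ
  have hS : ‖S A 1 φ‖ = ‖φ‖ := by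
    simp [S, Xop, Zop, Module.End.mul_apply, hA]
  have ha : ‖a‖ ≤ 2 * ‖φ‖ :=
    (norm_add_le _ _).trans_eq (by simp [Module.End.mul_apply, hA]; ring)
  have hb : ‖b‖ ≤ 2 * ‖φ‖ := by simp [b, norm_smul, Module.End.mul_apply, hA]
  calc (⟪φ, Bell A φ⟫_ℂ).re
      = (⟪φ, S A 1 φ⟫_ℂ).re + ((⟪A 0 0 φ, a + b⟫_ℂ).re + (⟪A 0 1 φ, a - b⟫_ℂ).re) := by
        rw [bell_eq]
        simp [hsa, a, b]
        ring
    _ ≤ ‖φ‖ * ‖φ‖ + 2 * √2 * (2 * ‖φ‖) * ‖φ‖ := by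
        gcongr
        · exact (re_inner_le_norm (𝕜 := ℂ) _ _).trans_eq (by rw [hS])
        · simpa only [RCLike.re_to_complex] using
            re_inner_add_add_re_inner_sub_le (𝕜 := ℂ) (hA 0 0 φ).le (hA 0 1 φ).le ha hb
    _ = (1 + 4 * √2) * ‖φ‖ ^ 2 := by ring

/-- the Tsirelson bound `re⟪φ, B₅ φ⟫ ≤ (1 + 4√2)·‖φ‖²` for self-adjoint
dichotomic observables commuting across different sites. -/
theorem quantum_bound (A : Fin 5 → Fin 2 → Module.End ℂ H)
    (hsa : ∀ i x (u v : H), ⟪A i x u, v⟫_ℂ = ⟪u, A i x v⟫_ℂ)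
    (hsq : ∀ i x, A i x * A i x = 1)
    (hcomm : ∀ i j x y, i ≠ j → A i x * A j y = A j y * A i x) :
    ∀ φ : H, (⟪φ, Bell A φ⟫_ℂ).re ≤ (1 + 4 * Real.sqrt 2) * ‖φ‖ ^ 2 :=
  quantum_bound_general A hsa hsq

end BellI5
end
end

section
/- Let H be a complex inner product space and let A : Fin 5 → Fin 2 → (H →ₗ[ℂ] H) satisfy: each A i x is self-adjoint, (A i x) ∘ (A i x) = id, and A i x commutes with A j y whenever i ≠ j. Define X'₁ = (A 1 0 + A 1 1)/√2, Z'₁ = (A 1 0 − A 1 1)/√2, X'ᵢ = A i 0, Z'ᵢ = A i 1 for i = 2,…,5, S'₁ = X'₁Z'₂Z'₃X'₄, S'₂ = X'₂Z'₃Z'₄X'₅, S'₃ = X'₁X'₃Z'₄Z'₅, S'₄ = Z'₁X'₂X'₄Z'₅, and B₅ = √2·S'₁ + S'₂ + √2·S'₃ + 2√2·S'₄. Suppose φ ∈ H satisfies ⟪φ, B₅ φ⟫ = (1 + 4√2)·‖φ‖². Then: (a) S'ᵢ φ = φ for every i ∈ {1,2,3,4}; (b) (X'₁)² φ = φ and (Z'₁)²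 φ = φ; and (c) (X'ᵢ ∘ Z'ᵢ + Z'ᵢ ∘ X'ᵢ) φ = 0 for every site i ∈ {1,2,3,4,5}. -/
/-!
Sites are numbered from 1 as in the paper; site `i` has index `i - 1` in the code.

Sum of squares. Away from site 1 the observables are involutions, while at site 1
`X'₁² + Z'₁² = 2` and `X'₁ Z'₁ + Z'₁ X'₁ = 0`. Hence `S'₂² = 1`, `S'₁² = S'₃² = X'₁²`, `S'₄² = Z'₁²`,
and with the weights `w = (√2, 1, √2, 2√2)` of `B₅` one gets `∑ wₖ (1 - S'ₖ)² = 2 (1 + 4√2) - 2 B₅`.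
Each `S'ₖ` is a product of commuting self-adjoint operators, so at a maximal violation
`∑ wₖ ‖(1 - S'ₖ) φ‖² = 0`: every `S'ₖ` stabilises `φ`, which is (a), and (b) follows from the squares.

For (c), `(a b + b a) φ = (a b S S' + b a S' S) φ` when `S, S'` stabilise `φ`; choosing `S` to contain
`b` and `S'` to contain `a`, the letters `a, b` cancel and the right side becomes the anticommutator
at another site times commuting factors. This reduces sites 2 and 4 to the operator identity at
site 1, site 5 to site 4, and site 3 to site 5.
-/

noncomputable section

open scoped InnerProductSpace

section Symmetric

variable {𝕜 E ι : Type*} [RCLike 𝕜] [NormedAddCommGroup E] [InnerProductSpace 𝕜 E]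

theorem LinearMap.IsSymmetric.mul_mul_mul {a b c d : E →ₗ[𝕜] E} (ha : a.IsSymmetric)
    (hb : b.IsSymmetric) (hc : c.IsSymmetric) (hd : d.IsSymmetric)
    (h : d * c * b * a = a * b * c * d) : (a * b * c * d).IsSymmetric := fun u v =>
  calc ⟪(a * b * c * d) u, v⟫_𝕜 = ⟪u, (d * c * b * a) v⟫_𝕜 := by
        simp only [Module.End.mul_apply, ha _, hb _, hc _, hd _]
    _ = ⟪u, (a * b * c * d) v⟫_𝕜 := by rw [h]

theorem LinearMap.IsSymmetric.inner_mul_self_apply {T : E →ₗ[𝕜] E} (hT : T.IsSymmetric)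
    (φ : E) : ⟪φ, (T * T) φ⟫_𝕜 = ((‖T φ‖ ^ 2 : ℝ) : 𝕜) := by
  rw [Module.End.mul_apply, ← hT, inner_self_eq_norm_sq_to_K, RCLike.ofReal_pow]

theorem LinearMap.IsSymmetric.apply_eq_zero_of_inner_sum_smul_mul_self_eq_zero [Fintype ι]
    {T : ι → E →ₗ[𝕜] E} (hT : ∀ i, (T i).IsSymmetric) {w : ι → ℝ} (hw : ∀ i, 0 < w i) {φ : E}
    (h : ⟪φ, (∑ i, (w i : 𝕜) • (T i * T i)) φ⟫_𝕜 = 0) (i : ι) : T i φ = 0 := by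
  simp only [LinearMap.sum_apply, LinearMap.smul_apply, inner_sum, inner_smul_right,
    (hT _).inner_mul_self_apply, ← RCLike.ofReal_mul, ← RCLike.ofReal_sum,
    RCLike.ofReal_eq_zero] at h
  have hi := (Finset.sum_eq_zero_iff_of_nonneg fun j _ => mul_nonneg (hw j).le (sq_nonneg _)).mp
    h i (Finset.mem_univ i)
  simpa [(hw i).ne'] using hi

end Symmetric

theorem Module.End.mul_add_mul_apply_eq_zero {R M : Type*} [Semiring R] [AddCommMonoid M]
    [Module R M] {a b s t c K : Module.End R M} {φ : M} (hs : s φ = φ) (ht : t φ = φ)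
    (h : a * b * s * t + b * a * t * s = c * K) (hK : K φ = 0) : (a * b + b * a) φ = 0 := by
  calc (a * b + b * a) φ = (a * b * s * t + b * a * t * s) φ := by
        simp only [LinearMap.add_apply, Module.End.mul_apply, hs, ht]
    _ = 0 := by rw [h, Module.End.mul_apply, hK, map_zero]

namespace BellI5

variable {H : Type*} [NormedAddCommGroup H] [InnerProductSpace ℂ H]

def obs (A : Fin 5 → Fin 2 → Module.End ℂ H) (i : Fin 5) : Fin 2 → Module.End ℂ H :=
  ![Xop A i, Zop A i]

variable {A : Fin 5 → Fin 2 → Module.End ℂ H}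

theorem obs_of_ne_zero {i : Fin 5} (hi : i ≠ 0) : obs A i = A i := by
  funext x
  fin_cases x <;> simp [obs, Xop, Zop, hi]

theorem obs_zero_zero : obs A 0 0 = (Real.sqrt 2 : ℂ)⁻¹ • (A 0 0 + A 0 1) := by simp [obs, Xop]

theorem obs_zero_one : obs A 0 1 = (Real.sqrt 2 : ℂ)⁻¹ • (A 0 0 - A 0 1) := by simp [obs, Zop]

theorem isSymmetric_obs (hsa : ∀ i x, (A i x).IsSymmetric) (i : Fin 5) (x : Fin 2) :
    (obs A i x).IsSymmetric := by
  have hc : starRingEnd ℂ (Real.sqrt 2 : ℂ)⁻¹ = (Real.sqrt 2 : ℂ)⁻¹ := by simp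
  by_cases hi : i = 0
  · subst hi
    match x with
    | 0 => rw [obs_zero_zero]; exact ((hsa 0 0).add (hsa 0 1)).smul hc
    | 1 => rw [obs_zero_one]; exact ((hsa 0 0).sub (hsa 0 1)).smul hc
  · rw [obs_of_ne_zero hi]
    exact hsa i x

theorem commute_obs_zero (hcomm : ∀ i j x y, i ≠ j → Commute (A i x) (A j y)) {j : Fin 5}
    (hj : j ≠ 0) (x y : Fin 2) : Commute (obs A 0 x) (A j y) := by
  have h0 := hcomm 0 j 0 y hj.symm
  have h1 := hcomm 0 j 1 y hj.symm
  match x with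
  | 0 => rw [obs_zero_zero]; exact (h0.add_left h1).smul_left _
  | 1 => rw [obs_zero_one]; exact (h0.sub_left h1).smul_left _

theorem commute_obs (hcomm : ∀ i j x y, i ≠ j → Commute (A i x) (A j y)) {i j : Fin 5}
    (hij : i ≠ j) (x y : Fin 2) : Commute (obs A i x) (obs A j y) := by
  by_cases hi : i = 0
  · subst hi
    rw [obs_of_ne_zero hij.symm]
    exact commute_obs_zero hcomm hij.symm x y
  · by_cases hj : j = 0
    · subst hj
      rw [obs_of_ne_zero hi]
      exact (commute_obs_zero hcomm hij y x).symm
    · rw [obs_of_ne_zero hi, obs_of_ne_zero hj]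
      exact hcomm i j x y hij

theorem obs_mul_self (hsq : ∀ i x, A i x * A i x = 1) {i : Fin 5} (hi : i ≠ 0) (x : Fin 2) :
    obs A i x * obs A i x = 1 := by
  rw [obs_of_ne_zero hi, hsq]

/- With `mul_assoc` and `obs_mul_self`, the three rules below let `simp (disch := decide)` sort a
product of observables by site and cancel squares away from index `0`: the commutation rules are
permutation lemmas, which `simp` applies only when they decrease the term order. -/

theorem obs_mul_obs_comm (hcomm : ∀ i j x y, i ≠ j → Commute (A i x) (A j y)) {i j : Fin 5}
    (hij : i ≠ j) (x y : Fin 2) : obs A i x * obs A j y = obs A j y * obs A i x :=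
  commute_obs hcomm hij x y

theorem obs_mul_obs_mul_comm (hcomm : ∀ i j x y, i ≠ j → Commute (A i x) (A j y))
    {i j : Fin 5} (hij : i ≠ j) (x y : Fin 2) (c : Module.End ℂ H) :
    obs A i x * (obs A j y * c) = obs A j y * (obs A i x * c) :=
  (commute_obs hcomm hij x y).left_comm c

theorem obs_mul_obs_mul_cancel (hsq : ∀ i x, A i x * A i x = 1) {i : Fin 5} (hi : i ≠ 0)
    (x : Fin 2) (c : Module.End ℂ H) : obs A i x * (obs A i x * c) = c := by
  rw [← mul_assoc, obs_mul_self hsq hi, one_mul]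

theorem obs_zero_anticomm (hsq : ∀ i x, A i x * A i x = 1) :
    obs A 0 0 * obs A 0 1 + obs A 0 1 * obs A 0 0 = 0 := by
  rw [obs_zero_zero, obs_zero_one, smul_mul_smul_comm, smul_mul_smul_comm, ← smul_add]
  have e : (A 0 0 + A 0 1) * (A 0 0 - A 0 1) + (A 0 0 - A 0 1) * (A 0 0 + A 0 1)
      = 2 • (A 0 0 * A 0 0 - A 0 1 * A 0 1) := by noncomm_ring
  rw [e, hsq, hsq, sub_self, smul_zero, smul_zero]

theorem obs_zero_mul_self_add (hsq : ∀ i x, A i x * A i x = 1) :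
    obs A 0 0 * obs A 0 0 + obs A 0 1 * obs A 0 1 = (2 : ℂ) • 1 := by
  rw [obs_zero_zero, obs_zero_one, smul_mul_smul_comm, smul_mul_smul_comm, ← smul_add]
  have e : (A 0 0 + A 0 1) * (A 0 0 + A 0 1) + (A 0 0 - A 0 1) * (A 0 0 - A 0 1)
      = 2 • (A 0 0 * A 0 0 + A 0 1 * A 0 1) := by noncomm_ring
  rw [e, hsq, hsq, ← mul_inv, ← Complex.ofReal_mul, Real.mul_self_sqrt zero_le_two]
  push_cast
  module

theorem S_zero : S A 0 = obs A 0 0 * obs A 1 1 * obs A 2 1 * obs A 3 0 := rfl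

theorem S_one : S A 1 = obs A 1 0 * obs A 2 1 * obs A 3 1 * obs A 4 0 := rfl

theorem S_two : S A 2 = obs A 0 0 * obs A 2 0 * obs A 3 1 * obs A 4 1 := rfl

theorem S_three : S A 3 = obs A 0 1 * obs A 1 0 * obs A 3 0 * obs A 4 1 := rfl

theorem S_zero_mul_self (hsq : ∀ i x, A i x * A i x = 1)
    (hcomm : ∀ i j x y, i ≠ j → Commute (A i x) (A j y)) :
    S A 0 * S A 0 = obs A 0 0 * obs A 0 0 := by
  simp (disch := decide) only [S_zero, mul_assoc, mul_one, obs_mul_self hsq,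
    obs_mul_obs_mul_comm hcomm]

theorem S_one_mul_self (hsq : ∀ i x, A i x * A i x = 1)
    (hcomm : ∀ i j x y, i ≠ j → Commute (A i x) (A j y)) : S A 1 * S A 1 = 1 := by
  simp (disch := decide) only [S_one, mul_assoc, mul_one, obs_mul_self hsq,
    obs_mul_obs_mul_comm hcomm]

theorem S_two_mul_self (hsq : ∀ i x, A i x * A i x = 1)
    (hcomm : ∀ i j x y, i ≠ j → Commute (A i x) (A j y)) :
    S A 2 * S A 2 = obs A 0 0 * obs A 0 0 := by
  simp (disch := decide) only [S_two, mul_assoc, mul_one, obs_mul_self hsq,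
    obs_mul_obs_mul_comm hcomm]

theorem S_three_mul_self (hsq : ∀ i x, A i x * A i x = 1)
    (hcomm : ∀ i j x y, i ≠ j → Commute (A i x) (A j y)) :
    S A 3 * S A 3 = obs A 0 1 * obs A 0 1 := by
  simp (disch := decide) only [S_three, mul_assoc, mul_one, obs_mul_self hsq,
    obs_mul_obs_mul_comm hcomm]

theorem isSymmetric_S (hsa : ∀ i x, (A i x).IsSymmetric)
    (hcomm : ∀ i j x y, i ≠ j → Commute (A i x) (A j y)) (k : Fin 4) : (S A k).IsSymmetric := by
  have hobs {i j k l : Fin 5} {x y z w : Fin 2}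
      (h : obs A l w * obs A k z * obs A j y * obs A i x =
        obs A i x * obs A j y * obs A k z * obs A l w) :
      (obs A i x * obs A j y * obs A k z * obs A l w).IsSymmetric :=
    (isSymmetric_obs hsa i x).mul_mul_mul (isSymmetric_obs hsa j y) (isSymmetric_obs hsa k z)
      (isSymmetric_obs hsa l w) h
  match k with
  | 0 => rw [S_zero]; exact hobs (by simp (disch := decide) only [mul_assoc,
    obs_mul_obs_comm hcomm, obs_mul_obs_mul_comm hcomm])
  | 1 => rw [S_one]; exact hobs (by simp (disch := decide) only [mul_assoc,
    obs_mul_obs_comm hcomm, obs_mul_obs_mul_comm hcomm])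
  | 2 => rw [S_two]; exact hobs (by simp (disch := decide) only [mul_assoc,
    obs_mul_obs_comm hcomm, obs_mul_obs_mul_comm hcomm])
  | 3 => rw [S_three]; exact hobs (by simp (disch := decide) only [mul_assoc,
    obs_mul_obs_comm hcomm, obs_mul_obs_mul_comm hcomm])

def bellWeight : Fin 4 → ℝ := ![Real.sqrt 2, 1, Real.sqrt 2, 2 * Real.sqrt 2]

theorem bellWeight_pos (k : Fin 4) : 0 < bellWeight k := by
  fin_cases k <;> simp [bellWeight]

theorem sum_bellWeight_smul_one_sub_S_mul_self (hsq : ∀ i x, A i x * A i x = 1)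
    (hcomm : ∀ i j x y, i ≠ j → Commute (A i x) (A j y)) :
    ∑ k, (bellWeight k : ℂ) • ((1 - S A k) * (1 - S A k)) =
      ((2 * (1 + 4 * Real.sqrt 2) : ℝ) : ℂ) • 1 - (2 : ℂ) • Bell A := by
  have hexpand (T : Module.End ℂ H) : (1 - T) * (1 - T) = 1 - 2 • T + T * T := by noncomm_ring
  have hX : obs A 0 0 * obs A 0 0 = (2 : ℂ) • 1 - obs A 0 1 * obs A 0 1 :=
    eq_sub_of_add_eq (obs_zero_mul_self_add hsq)
  simp only [hexpand, Fin.sum_univ_four, S_zero_mul_self hsq hcomm, S_one_mul_self hsq hcomm,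
    S_two_mul_self hsq hcomm, S_three_mul_self hsq hcomm, hX, Bell, bellWeight, Matrix.cons_val]
  push_cast
  module

theorem S_apply_eq_self_of_inner_Bell (hsa : ∀ i x, (A i x).IsSymmetric)
    (hsq : ∀ i x, A i x * A i x = 1) (hcomm : ∀ i j x y, i ≠ j → Commute (A i x) (A j y))
    {φ : H} (hφ : ⟪φ, Bell A φ⟫_ℂ = (((1 + 4 * Real.sqrt 2) * ‖φ‖ ^ 2 : ℝ) : ℂ)) (k : Fin 4) :
    S A k φ = φ := by
  have hnorm : ⟪φ, φ⟫_ℂ = ((‖φ‖ ^ 2 : ℝ) : ℂ) := by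
    rw [inner_self_eq_norm_sq_to_K]
    norm_cast
  have hsum : ⟪φ, (∑ k, (bellWeight k : ℂ) • ((1 - S A k) * (1 - S A k))) φ⟫_ℂ = 0 := by
    rw [sum_bellWeight_smul_one_sub_S_mul_self hsq hcomm, LinearMap.sub_apply, inner_sub_right,
      LinearMap.smul_apply, LinearMap.smul_apply, inner_smul_right, inner_smul_right,
      Module.End.one_apply, hnorm, hφ]
    push_cast
    ring
  have h := LinearMap.IsSymmetric.apply_eq_zero_of_inner_sum_smul_mul_self_eq_zero
    (fun k => LinearMap.IsSymmetric.one.sub (isSymmetric_S hsa hcomm k)) bellWeight_pos hsum k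
  rwa [LinearMap.sub_apply, Module.End.one_apply, sub_eq_zero, eq_comm] at h

theorem obs_anticomm_apply_eq_zero (hsq : ∀ i x, A i x * A i x = 1)
    (hcomm : ∀ i j x y, i ≠ j → Commute (A i x) (A j y)) {φ : H} (hS : ∀ k, S A k φ = φ)
    (i : Fin 5) : (obs A i 0 * obs A i 1 + obs A i 1 * obs A i 0) φ = 0 := by
  have h0 : (obs A 0 0 * obs A 0 1 + obs A 0 1 * obs A 0 0) φ = 0 := by
    rw [obs_zero_anticomm hsq, LinearMap.zero_apply]
  have h1 : (obs A 1 0 * obs A 1 1 + obs A 1 1 * obs A 1 0) φ = 0 :=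
    Module.End.mul_add_mul_apply_eq_zero (hS 0) (hS 3) (c := obs A 2 1 * obs A 4 1)
      (by simp (disch := decide) only [S_zero, S_three, mul_assoc, mul_add,
        obs_mul_obs_mul_cancel hsq, obs_mul_obs_comm hcomm, obs_mul_obs_mul_comm hcomm]) h0
  have h3 : (obs A 3 0 * obs A 3 1 + obs A 3 1 * obs A 3 0) φ = 0 :=
    Module.End.mul_add_mul_apply_eq_zero (hS 2) (hS 3) (c := obs A 1 0 * obs A 2 0)
      (by simp (disch := decide) only [S_two, S_three, mul_assoc, mul_one, mul_add,
        obs_mul_self hsq, obs_mul_obs_mul_cancel hsq, obs_mul_obs_comm hcomm,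
        obs_mul_obs_mul_comm hcomm]) h0
  have h4 : (obs A 4 0 * obs A 4 1 + obs A 4 1 * obs A 4 0) φ = 0 :=
    Module.End.mul_add_mul_apply_eq_zero (hS 3) (hS 1) (c := obs A 0 1 * obs A 2 1)
      (by simp (disch := decide) only [S_one, S_three, mul_assoc, mul_one, mul_add,
        obs_mul_self hsq, obs_mul_obs_mul_cancel hsq, obs_mul_obs_comm hcomm,
        obs_mul_obs_mul_comm hcomm]) h3
  have h2 : (obs A 2 0 * obs A 2 1 + obs A 2 1 * obs A 2 0) φ = 0 :=
    Module.End.mul_add_mul_apply_eq_zero (hS 1) (hS 2) (c := obs A 0 0 * obs A 1 0)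
      (by simp (disch := decide) only [S_one, S_two, mul_assoc, mul_add,
        obs_mul_obs_mul_cancel hsq, obs_mul_obs_mul_comm hcomm]) h4
  match i with
  | 0 => exact h0
  | 1 => exact h1
  | 2 => exact h2
  | 3 => exact h3
  | 4 => exact h4

/-- algebraic relations extracted from a maximal violation of `I₅`:
(a) the state is stabilized by `S'₁,…,S'₄`; (b) `X'₁` and `Z'₁` square to the identity
on the state; (c) at every site the effective observables anticommute on the state. -/
theorem relations_from_maximal_violation (A : Fin 5 → Fin 2 → Module.End ℂ H)
    (hsa : ∀ i x (u v : H), ⟪A i x u, v⟫_ℂ = ⟪u, A i x v⟫_ℂ)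
    (hsq : ∀ i x, A i x * A i x = 1)
    (hcomm : ∀ i j x y, i ≠ j → A i x * A j y = A j y * A i x)
    (φ : H) (hφ : ⟪φ, Bell A φ⟫_ℂ = (((1 + 4 * Real.sqrt 2) * ‖φ‖ ^ 2 : ℝ) : ℂ)) :
    (∀ i : Fin 4, S A i φ = φ) ∧
    ((Xop A 0 * Xop A 0) φ = φ ∧ (Zop A 0 * Zop A 0) φ = φ) ∧
    (∀ i : Fin 5, (Xop A i * Zop A i + Zop A i * Xop A i) φ = 0) := by
  have hS := S_apply_eq_self_of_inner_Bell hsa hsq hcomm hφ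
  refine ⟨hS, ⟨?_, ?_⟩, obs_anticomm_apply_eq_zero hsq hcomm hS⟩
  · rw [show Xop A 0 * Xop A 0 = S A 0 * S A 0 from (S_zero_mul_self hsq hcomm).symm,
      Module.End.mul_apply, hS, hS]
  · rw [show Zop A 0 * Zop A 0 = S A 3 * S A 3 from (S_three_mul_self hsq hcomm).symm,
      Module.End.mul_apply, hS, hS]

end BellI5
end
end

section
/- Let V and W be vector spaces over ℂ, let ι be an index type, and let S : ι → (V →ₗ[ℂ] V) be a family of linear endomorphisms. If ψ ∈ V ⊗[ℂ] W satisfies (LinearMap.rTensor W (S i)) ψ = ψ for every i ∈ ι, then ψ lies in the range of LinearMap.rTensor W (Submodule.subtype K), where K = ⨅ i, ker(S i − id) is the common fixed subspace; that is, ψ belongs to the image of K ⊗[ℂ] W inside V ⊗[ℂ] W. -/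
open scoped TensorProduct

/-!
Expand `ψ = ∑ⱼ ψⱼ ⊗ bⱼ` along a basis `b` of `W`. Since `S i ⊗ id` acts coordinatewise,
`ψ = (S i ⊗ id) ψ` forces `S i ψⱼ = ψⱼ` for all `i`, so every coefficient `ψⱼ` lies in the common
fixed subspace `K`, and `ψ` is the image of `∑ⱼ ψⱼ ⊗ bⱼ ∈ K ⊗ W`.
-/

namespace TensorProduct

variable {R M M' N κ : Type*} [CommSemiring R] [AddCommMonoid M] [Module R M]
  [AddCommMonoid M'] [Module R M'] [AddCommMonoid N] [Module R N] [DecidableEq κ]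

theorem equivFinsuppOfBasisRight_rTensor_apply (𝒞 : Module.Basis κ R N) (f : M →ₗ[R] M')
    (x : M ⊗[R] N) (j : κ) :
    equivFinsuppOfBasisRight 𝒞 (f.rTensor N x) j = f (equivFinsuppOfBasisRight 𝒞 x j) := by
  induction x with
  | zero => simp
  | tmul m n => simp
  | add x y hx hy => simp [hx, hy]

theorem mem_range_rTensor_subtype_of_forall_mem (𝒞 : Module.Basis κ R N) (p : Submodule R M)
    (x : M ⊗[R] N) (hx : ∀ j, equivFinsuppOfBasisRight 𝒞 x j ∈ p) :
    x ∈ LinearMap.range (p.subtype.rTensor N) := by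
  rw [← (equivFinsuppOfBasisRight 𝒞).symm_apply_apply x, equivFinsuppOfBasisRight_symm_apply]
  exact Submodule.finsuppSum_mem _ _ _ _ fun j _ => ⟨⟨_, hx j⟩ ⊗ₜ 𝒞 j, rfl⟩

end TensorProduct

open TensorProduct in
theorem mem_range_rTensor_iInf_ker_sub_id_of_forall_rTensor_eq {R V W ι : Type*} [CommRing R]
    [AddCommGroup V] [Module R V] [AddCommGroup W] [Module R W] [Module.Free R W]
    (S : ι → V →ₗ[R] V) (ψ : V ⊗[R] W) (h : ∀ i, (S i).rTensor W ψ = ψ) :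
    ψ ∈ LinearMap.range ((⨅ i, LinearMap.ker (S i - LinearMap.id)).subtype.rTensor W) := by
  classical
  let b := Module.Free.chooseBasis R W
  refine mem_range_rTensor_subtype_of_forall_mem b _ ψ fun j =>
    (Submodule.mem_iInf _).2 fun i => ?_
  have hfix := congrArg (equivFinsuppOfBasisRight b · j) (h i)
  simp only [equivFinsuppOfBasisRight_rTensor_apply] at hfix
  simp [hfix]

/-- a vector of `V ⊗ W` fixed by `S i ⊗ id` for every `i` lies in the image of
`K ⊗ W`, where `K = ⨅ i, ker (S i − id)` is the common fixed subspace of the `S i`. -/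
theorem fixed_vector_in_stabilized_subspace_tensor {V W : Type*}
    [AddCommGroup V] [Module ℂ V] [AddCommGroup W] [Module ℂ W]
    {ι : Type*} (S : ι → (V →ₗ[ℂ] V)) (ψ : V ⊗[ℂ] W)
    (h : ∀ i, LinearMap.rTensor W (S i) ψ = ψ) :
    ψ ∈ LinearMap.range
      (LinearMap.rTensor W
        (Submodule.subtype (⨅ i, LinearMap.ker (S i - LinearMap.id)))) :=
  mem_range_rTensor_iInf_ker_sub_id_of_forall_rTensor_eq S ψ h
end

section
/- Let G be a connected simple graph on a vertex type V, and suppose its edge set is partitioned as G.edgeSet = A ∪ B with A and B disjoint and both nonempty. Then there exists a vertex v ∈ V, an edge e_A ∈ A and an edge e_B ∈ B such that v is an endpoint of e_A and v is an endpoint of e_B. -/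
namespace SimpleGraph.Walk

variable {V : Type*} {G : SimpleGraph V} {A B : Set (Sym2 V)}

/-- Walking from an `A`-edge to a `B`-edge, the first edge of the walk lying in `B` meets the
`A`-edge just used (or the starting one) at a vertex. -/
theorem exists_vertex_mem_edge_mem_both (hAB : G.edgeSet ⊆ A ∪ B) {u v : V} (p : G.Walk u v)
    {eA eB : Sym2 V} (heA : eA ∈ A) (hu : u ∈ eA) (heB : eB ∈ B) (hv : v ∈ eB) :
    ∃ (x : V) (fA fB : Sym2 V), fA ∈ A ∧ fB ∈ B ∧ x ∈ fA ∧ x ∈ fB := by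
  induction p generalizing eA with
  | nil => exact ⟨_, eA, eB, heA, heB, hu, hv⟩
  | @cons a b _ hab p ih =>
    rcases hAB (G.mem_edgeSet.mpr hab) with habA | habB
    · exact ih habA (Sym2.mem_mk_right a b) hv
    · exact ⟨a, eA, s(a, b), heA, habB, hu, Sym2.mem_mk_left a b⟩

end SimpleGraph.Walk

theorem exists_vertex_meeting_both_parts_general {V : Type*} (G : SimpleGraph V)
    (hG : G.Connected) (A B : Set (Sym2 V))
    (hpart : G.edgeSet = A ∪ B)
    (hA : A.Nonempty) (hB : B.Nonempty) :
    ∃ (v : V) (eA eB : Sym2 V), eA ∈ A ∧ eB ∈ B ∧ v ∈ eA ∧ v ∈ eB := by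
  obtain ⟨eA, heA⟩ := hA
  obtain ⟨eB, heB⟩ := hB
  obtain ⟨p⟩ := hG eA.out.1 eB.out.1
  exact p.exists_vertex_mem_edge_mem_both hpart.subset heA (Sym2.out_fst_mem eA) heB
    (Sym2.out_fst_mem eB)

/-- if the edge set of a connected simple graph is partitioned into two disjoint
nonempty parts `A` and `B`, then some vertex is an endpoint of both an edge of `A` and an
edge of `B`. -/
theorem exists_vertex_meeting_both_parts {V : Type*} (G : SimpleGraph V)
    (hG : G.Connected) (A B : Set (Sym2 V))
    (hpart : G.edgeSet = A ∪ B) (hdisj : Disjoint A B)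
    (hA : A.Nonempty) (hB : B.Nonempty) :
    ∃ (v : V) (eA eB : Sym2 V), eA ∈ A ∧ eB ∈ B ∧ v ∈ eA ∧ v ∈ eB :=
  exists_vertex_meeting_both_parts_general G hG A B hpart hA hB
end

section
/- Let n be a positive natural number, P ≠ 0 a complex n×n orthogonal projection matrix (P Hermitian with P·P = P), and ρ a density matrix (positive semidefinite with trace 1). Then the real number (trace (P·ρ)).re is the greatest element of the set of fidelities { F(σ, ρ) | σ a density matrix with P·σ·P = σ }; that is, F(σ, ρ) ≤ (trace (P·ρ)).re for every density matrix σ supported on P, and this value is attained by some such σ. -/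
noncomputable section

open Matrix
open scoped Classical ComplexOrder

namespace SubspaceFidelity

/-- The positive semidefinite square root of a positive semidefinite matrix
(junk value `0` on matrices that are not positive semidefinite). -/
def psqrt {n : ℕ} (M : Matrix (Fin n) (Fin n) ℂ) : Matrix (Fin n) (Fin n) ℂ :=
  if h : M.PosSemidef then
    (h.1.eigenvectorUnitary : Matrix (Fin n) (Fin n) ℂ) *
      diagonal ((↑) ∘ Real.sqrt ∘ h.1.eigenvalues) *
      (star h.1.eigenvectorUnitary : Matrix (Fin n) (Fin n) ℂ)
  else 0

/-- The fidelity `F(σ, ρ) = (tr √(√σ · ρ · √σ))²` of two positive semidefinite matrices. -/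
def fid {n : ℕ} (σ ρ : Matrix (Fin n) (Fin n) ℂ) : ℝ :=
  ((psqrt (psqrt σ * ρ * psqrt σ)).trace).re ^ 2

/-- The old Mathlib `Matrix.PosSemidef.sqrt`. -/
def _root_.Matrix.PosSemidef.sqrt {n : ℕ} {M : Matrix (Fin n) (Fin n) ℂ} (h : M.PosSemidef) :
    Matrix (Fin n) (Fin n) ℂ :=
  (h.1.eigenvectorUnitary : Matrix (Fin n) (Fin n) ℂ) *
    diagonal ((↑) ∘ Real.sqrt ∘ h.1.eigenvalues) *
    (star h.1.eigenvectorUnitary : Matrix (Fin n) (Fin n) ℂ)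

open scoped MatrixOrder in
lemma _root_.Matrix.PosSemidef.sqrt_eq_cfc' {n : ℕ} {M : Matrix (Fin n) (Fin n) ℂ}
    (h : M.PosSemidef) : h.sqrt = CFC.sqrt M := by
  rw [CFC.sqrt_eq_cfc, cfc_nnreal_eq_real _ M (Matrix.nonneg_iff_posSemidef.mpr h), h.1.cfc_eq,
    IsHermitian.cfc, Unitary.conjStarAlgAut_apply, Matrix.PosSemidef.sqrt]
  congr 3
  funext i
  simp [max_eq_left (h.eigenvalues_nonneg i)]

open scoped MatrixOrder in
lemma _root_.Matrix.PosSemidef.posSemidef_sqrt {n : ℕ} {M : Matrix (Fin n) (Fin n) ℂ}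
    (h : M.PosSemidef) : h.sqrt.PosSemidef := by
  rw [h.sqrt_eq_cfc']
  exact Matrix.nonneg_iff_posSemidef.mp (CFC.sqrt_nonneg M)

open scoped MatrixOrder in
lemma _root_.Matrix.PosSemidef.sqrt_mul_self {n : ℕ} {M : Matrix (Fin n) (Fin n) ℂ}
    (h : M.PosSemidef) : h.sqrt * h.sqrt = M := by
  rw [h.sqrt_eq_cfc']
  exact CFC.sqrt_mul_sqrt_self M (Matrix.nonneg_iff_posSemidef.mpr h)

open scoped MatrixOrder in
lemma _root_.Matrix.PosSemidef.eq_sqrt_of_sq_eq {n : ℕ} {M B : Matrix (Fin n) (Fin n) ℂ}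
    (hB : B.PosSemidef) (h : M.PosSemidef) (hsq : B ^ 2 = M) : B = h.sqrt := by
  rw [h.sqrt_eq_cfc']
  subst hsq
  exact (CFC.sqrt_sq B (Matrix.nonneg_iff_posSemidef.mpr hB)).symm

lemma inner_piLp_equiv_symm' {n : ℕ} (x y : Fin n → ℂ) :
    inner ℂ ((WithLp.equiv 2 (Fin n → ℂ)).symm x) ((WithLp.equiv 2 (Fin n → ℂ)).symm y)
      = star x ⬝ᵥ y := by
  rw [dotProduct_comm]
  rfl

variable {n : ℕ}

lemma psqrt_of_psd {M : Matrix (Fin n) (Fin n) ℂ} (h : M.PosSemidef) : psqrt M = h.sqrt :=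
  dif_pos h

lemma smul_psd {c : ℝ} (hc : 0 ≤ c) {A : Matrix (Fin n) (Fin n) ℂ} (hA : A.PosSemidef) :
    ((c:ℂ) • A).PosSemidef := by
  constructor
  · unfold Matrix.IsHermitian
    rw [Matrix.conjTranspose_smul, hA.1.eq]
    congr 1
    simp
  · have : (0:ℂ) ≤ (c:ℂ) := by
      rw [Complex.le_def]; simp [hc]
    exact (hA.smul this).2

lemma sqrt_support {P σ : Matrix (Fin n) (Fin n) ℂ} (hP : P.IsHermitian) (hproj : P * P = P)
    (hσ : σ.PosSemidef) (hsup : P * σ * P = σ) :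
    P * hσ.sqrt = hσ.sqrt ∧ hσ.sqrt * P = hσ.sqrt := by
  set S := hσ.sqrt with hS
  have hSH : S.IsHermitian := hσ.posSemidef_sqrt.1
  have h1 : (1 - P) * P = 0 := by rw [sub_mul, one_mul, hproj, sub_self]
  have h2 : P * (1 - P) = 0 := by rw [mul_sub, mul_one, hproj, sub_self]
  have hQ : (1 - P) * σ * (1 - P) = 0 := by
    conv_lhs => rw [← hsup]
    rw [show (1 - P) * (P * σ * P) * (1 - P) = ((1 - P) * P) * σ * (P * (1 - P)) by
      noncomm_ring, h1, h2, Matrix.zero_mul, Matrix.mul_zero]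
  have hX : S * (1 - P) = 0 := by
    rw [← Matrix.conjTranspose_mul_self_eq_zero (A := S * (1 - P))]
    have h1P : (1 - P).IsHermitian := (Matrix.isHermitian_one).sub hP
    calc (S * (1 - P))ᴴ * (S * (1 - P)) = (1 - P) * (S * S) * (1 - P) := by
          rw [Matrix.conjTranspose_mul, h1P.eq, hSH.eq]; noncomm_ring
      _ = 0 := by rw [hσ.sqrt_mul_self, hQ]
  have hSP : S * P = S := by
    have := hX
    rw [mul_sub, mul_one, sub_eq_zero] at this
    exact this.symm
  refine ⟨?_, hSP⟩
  have := congrArg Matrix.conjTranspose hSP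
  rwa [Matrix.conjTranspose_mul, hP.eq, hSH.eq] at this

variable {n : ℕ}

lemma trace_sqrt_eq {M : Matrix (Fin n) (Fin n) ℂ} (hM : M.PosSemidef) :
    hM.sqrt.trace = ((∑ i, Real.sqrt (hM.1.eigenvalues i) : ℝ) : ℂ) := by
  rw [Matrix.PosSemidef.sqrt, Matrix.trace_mul_cycle]
  rw [show (star hM.1.eigenvectorUnitary.1 : Matrix (Fin n) (Fin n) ℂ) * hM.1.eigenvectorUnitary.1 = 1 from hM.1.eigenvectorUnitary.2.1]
  rw [Matrix.one_mul, Matrix.trace_diagonal]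
  push_cast
  rfl

lemma bessel (C : Matrix (Fin n) (Fin n) ℂ) (T : Finset (Fin n))
    (u : Fin n → (Fin n → ℂ))
    (hu : Orthonormal ℂ (fun i : T => (WithLp.equiv 2 (Fin n → ℂ)).symm (u i))) :
    ∑ i ∈ T, ∑ k, ‖(C *ᵥ u i) k‖ ^ 2 ≤ ∑ k, ∑ j, ‖C k j‖ ^ 2 := by
  rw [Finset.sum_comm]
  apply Finset.sum_le_sum
  intro k _
  set c : EuclideanSpace ℂ (Fin n) := (WithLp.equiv 2 (Fin n → ℂ)).symm (star (C k)) with hc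
  have hnc : ∑ j, ‖C k j‖ ^ 2 = ‖c‖ ^ 2 := by
    rw [EuclideanSpace.norm_eq, Real.sq_sqrt (Finset.sum_nonneg fun _ _ => sq_nonneg _)]
    simp [hc]
  have key : ∀ i, ‖(C *ᵥ u i) k‖ ^ 2
      = ‖(inner ℂ ((WithLp.equiv 2 (Fin n → ℂ)).symm (u i)) c : ℂ)‖ ^ 2 := by
    intro i
    rw [← norm_inner_symm]
    congr 2
    rw [hc, inner_piLp_equiv_symm', star_star]
    rfl
  calc ∑ i ∈ T, ‖(C *ᵥ u i) k‖ ^ 2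
      = ∑ i ∈ T.attach, ‖(inner ℂ ((WithLp.equiv 2 (Fin n → ℂ)).symm (u i)) c : ℂ)‖ ^ 2 := by
        rw [Finset.sum_attach T (fun i => ‖(inner ℂ ((WithLp.equiv 2 (Fin n → ℂ)).symm (u i)) c : ℂ)‖ ^ 2)]
        exact Finset.sum_congr rfl fun i _ => key i
    _ ≤ ‖c‖ ^ 2 := hu.sum_inner_products_le c
    _ = ∑ j, ‖C k j‖ ^ 2 := hnc.symm

lemma trace_ct_mul_self (A : Matrix (Fin n) (Fin n) ℂ) :
    (Aᴴ * A).trace = ((∑ k, ∑ j, ‖A k j‖ ^ 2 : ℝ) : ℂ) := by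
  simp only [Matrix.trace, Matrix.diag, Matrix.mul_apply, Matrix.conjTranspose_apply]
  push_cast
  rw [Finset.sum_comm]
  congr 1; ext k; congr 1; ext j
  rw [mul_comm, ← Complex.mul_conj']
  rfl

lemma trace_sqrt_le (A B : Matrix (Fin n) (Fin n) ℂ)
    (hM : ((A * B)ᴴ * (A * B)).PosSemidef) :
    hM.sqrt.trace.re ≤ Real.sqrt ((A * Aᴴ).trace.re) * Real.sqrt ((Bᴴ * B).trace.re) := by
  have hH : ((A * B)ᴴ * (A * B)).IsHermitian := hM.1
  set lam : Fin n → ℝ := hH.eigenvalues with hlam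
  have hlam0 : ∀ i, 0 ≤ lam i := fun i => hM.eigenvalues_nonneg i
  set v : Fin n → (Fin n → ℂ) := fun i => ⇑(hH.eigenvectorBasis i) with hv
  have hvON : ∀ i j, star (v i) ⬝ᵥ v j = if i = j then (1:ℂ) else 0 := by
    intro i j
    have := (orthonormal_iff_ite (𝕜 := ℂ)).mp hH.eigenvectorBasis.orthonormal i j
    rw [← this]
    exact dotProduct_comm _ _
  set w : Fin n → (Fin n → ℂ) := fun i => (A * B) *ᵥ v i with hw
  set b : Fin n → (Fin n → ℂ) := fun i => B *ᵥ v i with hb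
  have hwb : ∀ i, w i = A *ᵥ b i := by
    intro i; simp [hw, hb, ← Matrix.mulVec_mulVec]
  -- key inner product identity
  have key : ∀ i j, star (w i) ⬝ᵥ w j = if i = j then (lam j : ℂ) else 0 := by
    intro i j
    rw [hw]
    simp only
    rw [Matrix.star_mulVec, ← Matrix.dotProduct_mulVec, Matrix.mulVec_mulVec,
      hH.mulVec_eigenvectorBasis]
    rw [show (lam j • ⇑(hH.eigenvectorBasis j) : Fin n → ℂ) = ((lam j : ℂ) • v j) from
      RCLike.real_smul_eq_coe_smul (K := ℂ) _ _]
    rw [dotProduct_smul, hvON i j]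
    by_cases h : i = j <;> simp [h]
  -- norms of w
  have hwnorm : ∀ i, ∑ k, ‖w i k‖ ^ 2 = lam i := by
    intro i
    have h := key i i
    rw [if_pos rfl] at h
    have : star (w i) ⬝ᵥ w i = ((∑ k, ‖w i k‖ ^ 2 : ℝ) : ℂ) := by
      simp only [dotProduct, Pi.star_apply]
      push_cast
      congr 1; ext k
      rw [mul_comm, ← Complex.mul_conj']
      rfl
    rw [this] at h
    exact_mod_cast h
  -- the sets and families
  set T : Finset (Fin n) := Finset.univ.filter (fun i => lam i ≠ 0) with hT
  set u : Fin n → (Fin n → ℂ) := fun i => ((Real.sqrt (lam i))⁻¹ : ℂ) • w i with hu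
  have hudot : ∀ i j, star (u i) ⬝ᵥ u j =
      ((Real.sqrt (lam i))⁻¹ : ℂ) * ((Real.sqrt (lam j))⁻¹ : ℂ) * (star (w i) ⬝ᵥ w j) := by
    intro i j
    rw [hu]
    simp only [star_smul, smul_dotProduct, dotProduct_smul]
    rw [show star (((Real.sqrt (lam i))⁻¹ : ℂ)) = ((Real.sqrt (lam i))⁻¹ : ℂ) by
      simp [Complex.star_def, map_inv₀, Complex.conj_ofReal]]
    simp only [smul_eq_mul]
    ring
  -- orthonormality of u over T
  have huON : Orthonormal ℂ (fun i : T => (WithLp.equiv 2 (Fin n → ℂ)).symm (u i)) := by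
    rw [orthonormal_iff_ite]
    intro i j
    rw [inner_piLp_equiv_symm', hudot i j, key i j]
    by_cases h : (i : Fin n) = j
    · have hij : i = j := Subtype.ext h
      have hlamne : lam (j : Fin n) ≠ 0 := (Finset.mem_filter.mp j.2).2
      have hpos : 0 < lam (j : Fin n) := lt_of_le_of_ne (hlam0 _) (Ne.symm hlamne)
      have hs : Real.sqrt (lam (j : Fin n)) ≠ 0 := by positivity
      rw [if_pos h, if_pos hij, h]
      rw [show (((Real.sqrt (lam (j:Fin n)))⁻¹ : ℂ) * ((Real.sqrt (lam (j:Fin n)))⁻¹ : ℂ) * ((lam (j:Fin n) : ℝ) : ℂ)) = ((((Real.sqrt (lam (j:Fin n)))⁻¹ * (Real.sqrt (lam (j:Fin n)))⁻¹ * lam (j:Fin n) : ℝ)) : ℂ) by push_cast; ring]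
      rw [show ((Real.sqrt (lam (j:Fin n)))⁻¹ * (Real.sqrt (lam (j:Fin n)))⁻¹ * lam (j:Fin n) : ℝ) = 1 by
        rw [← Real.mul_self_sqrt (hlam0 (j : Fin n))]
        field_simp
        rw [Real.sqrt_sq (Real.sqrt_nonneg _)]]
      norm_num
    · rw [if_neg h, if_neg (fun hij => h (congrArg Subtype.val hij))]
      ring
  -- pointwise bound
  set al : Fin n → ℝ := fun i => if lam i ≠ 0 then Real.sqrt (∑ k, ‖(Aᴴ *ᵥ u i) k‖ ^ 2) else 0
    with hal
  set be : Fin n → ℝ := fun i => ∑ k, ‖(b i) k‖ ^ 2 with hbe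
  have hbe0 : ∀ i, 0 ≤ be i := fun i => Finset.sum_nonneg fun _ _ => sq_nonneg _
  have hal0 : ∀ i, 0 ≤ al i := by
    intro i
    rw [hal]
    by_cases h : lam i ≠ 0 <;> simp [h, Real.sqrt_nonneg]
  have pointwise : ∀ i, Real.sqrt (lam i) ≤ al i * Real.sqrt (be i) := by
    intro i
    by_cases h : lam i = 0
    · simp [hal, h]
    · have hpos : 0 < lam i := lt_of_le_of_ne (hlam0 i) (Ne.symm h)
      have hspos : 0 < Real.sqrt (lam i) := Real.sqrt_pos.mpr hpos
      set SA : ℝ := ∑ k, ‖(Aᴴ *ᵥ w i) k‖ ^ 2 with hSA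
      have hSA0 : 0 ≤ SA := Finset.sum_nonneg fun _ _ => sq_nonneg _
      -- claim1 : lam i ≤ √SA * √be i
      have claim1 : lam i ≤ Real.sqrt SA * Real.sqrt (be i) := by
        have e1 : star (w i) ⬝ᵥ w i = star (Aᴴ *ᵥ w i) ⬝ᵥ b i := by
          have h' : star (Aᴴ *ᵥ w i) ⬝ᵥ b i = star (w i) ⬝ᵥ w i := by
            rw [Matrix.star_mulVec, Matrix.conjTranspose_conjTranspose,
              ← Matrix.dotProduct_mulVec, ← hwb i]
          exact h'.symm
        have e2 : (star (w i) ⬝ᵥ w i).re = lam i := by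
          rw [key i i, if_pos rfl, Complex.ofReal_re]
        have e3 : star (Aᴴ *ᵥ w i) ⬝ᵥ b i =
            (inner ℂ ((WithLp.equiv 2 (Fin n → ℂ)).symm (Aᴴ *ᵥ w i))
              ((WithLp.equiv 2 (Fin n → ℂ)).symm (b i)) : ℂ) := by
          rw [inner_piLp_equiv_symm']
        have e4 : ‖(inner ℂ ((WithLp.equiv 2 (Fin n → ℂ)).symm (Aᴴ *ᵥ w i))
              ((WithLp.equiv 2 (Fin n → ℂ)).symm (b i)) : ℂ)‖
            ≤ Real.sqrt SA * Real.sqrt (be i) := by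
          refine le_trans (norm_inner_le_norm _ _) ?_
          apply mul_le_mul
          · rw [EuclideanSpace.norm_eq]
            apply Real.sqrt_le_sqrt
            apply le_of_eq
            congr 1
          · rw [EuclideanSpace.norm_eq]
            apply Real.sqrt_le_sqrt
            apply le_of_eq
            congr 1
          · exact norm_nonneg _
          · exact Real.sqrt_nonneg _
        calc lam i = (star (w i) ⬝ᵥ w i).re := e2.symm
          _ ≤ ‖star (w i) ⬝ᵥ w i‖ := Complex.re_le_norm _
          _ = ‖(inner ℂ ((WithLp.equiv 2 (Fin n → ℂ)).symm (Aᴴ *ᵥ w i))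
              ((WithLp.equiv 2 (Fin n → ℂ)).symm (b i)) : ℂ)‖ := by rw [e1, e3]
          _ ≤ Real.sqrt SA * Real.sqrt (be i) := e4
      -- claim2 : α = λ⁻¹ SA
      have claim2 : (∑ k, ‖(Aᴴ *ᵥ u i) k‖ ^ 2) = (lam i)⁻¹ * SA := by
        have e5 : Aᴴ *ᵥ u i = ((Real.sqrt (lam i))⁻¹ : ℂ) • (Aᴴ *ᵥ w i) := by
          rw [hu]; simp [Matrix.mulVec_smul]
        rw [e5, hSA, Finset.mul_sum]
        congr 1; ext k
        simp only [Pi.smul_apply, smul_eq_mul, norm_mul, mul_pow]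
        congr 1
        rw [norm_inv, Complex.norm_real, Real.norm_eq_abs, abs_of_nonneg (Real.sqrt_nonneg _),
          inv_pow, Real.sq_sqrt (hlam0 i)]
      have hali : al i = Real.sqrt ((lam i)⁻¹) * Real.sqrt SA := by
        simp only [hal]
        rw [if_pos h, claim2, Real.sqrt_mul (by positivity)]
      calc Real.sqrt (lam i) = lam i / Real.sqrt (lam i) := (Real.div_sqrt).symm
        _ ≤ (Real.sqrt SA * Real.sqrt (be i)) / Real.sqrt (lam i) := by
            exact (div_le_div_iff_of_pos_right hspos).mpr claim1
        _ = al i * Real.sqrt (be i) := by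
            rw [hali, Real.sqrt_inv]
            field_simp
  -- sum bounds
  have hsum1 : ∑ i, al i ^ 2 ≤ (A * Aᴴ).trace.re := by
    have e6 : ∑ i, al i ^ 2 = ∑ i ∈ T, ∑ k, ‖(Aᴴ *ᵥ u i) k‖ ^ 2 := by
      rw [hT, Finset.sum_filter]
      congr 1; ext i
      by_cases h : lam i ≠ 0
      · rw [if_pos h]
        simp only [hal]
        rw [if_pos h, Real.sq_sqrt (Finset.sum_nonneg fun _ _ => sq_nonneg _)]
      · rw [if_neg h]
        simp only [hal]
        rw [if_neg h]
        norm_num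
    rw [e6]
    have e7 := bessel Aᴴ T u huON
    refine le_trans e7 (le_of_eq ?_)
    have e8 := trace_ct_mul_self Aᴴ
    rw [Matrix.conjTranspose_conjTranspose] at e8
    rw [e8, Complex.ofReal_re]
  have hvONuniv : Orthonormal ℂ (fun i : (Finset.univ : Finset (Fin n)) =>
      (WithLp.equiv 2 (Fin n → ℂ)).symm (v i)) := by
    rw [orthonormal_iff_ite]
    intro i j
    rw [inner_piLp_equiv_symm', hvON]
    by_cases h : (i : Fin n) = j
    · rw [if_pos h, if_pos (Subtype.ext h)]
    · rw [if_neg h, if_neg (fun hij => h (congrArg Subtype.val hij))]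
  have hsum2 : ∑ i, be i ≤ (Bᴴ * B).trace.re := by
    have e9 := bessel B Finset.univ v hvONuniv
    refine le_trans (le_of_eq ?_) (le_trans e9 (le_of_eq ?_))
    · rfl
    · rw [trace_ct_mul_self B, Complex.ofReal_re]
  -- Cauchy-Schwarz on sums
  have hCS : ∑ i, Real.sqrt (lam i) ≤
      Real.sqrt (∑ i, al i ^ 2) * Real.sqrt (∑ i, be i) := by
    have step1 : ∑ i, Real.sqrt (lam i) ≤ ∑ i, al i * Real.sqrt (be i) :=
      Finset.sum_le_sum fun i _ => pointwise i
    have step2 : (∑ i, al i * Real.sqrt (be i)) ^ 2 ≤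
        (∑ i, al i ^ 2) * (∑ i, (Real.sqrt (be i)) ^ 2) :=
      Finset.sum_mul_sq_le_sq_mul_sq _ _ _
    have step3 : ∑ i, (Real.sqrt (be i)) ^ 2 = ∑ i, be i := by
      congr 1; ext i; exact Real.sq_sqrt (hbe0 i)
    have h0 : 0 ≤ ∑ i, al i * Real.sqrt (be i) :=
      Finset.sum_nonneg fun i _ => mul_nonneg (hal0 i) (Real.sqrt_nonneg _)
    calc ∑ i, Real.sqrt (lam i) ≤ ∑ i, al i * Real.sqrt (be i) := step1
      _ = Real.sqrt ((∑ i, al i * Real.sqrt (be i)) ^ 2) := (Real.sqrt_sq h0).symm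
      _ ≤ Real.sqrt ((∑ i, al i ^ 2) * (∑ i, be i)) := by
          apply Real.sqrt_le_sqrt
          rw [← step3]
          exact step2
      _ = Real.sqrt (∑ i, al i ^ 2) * Real.sqrt (∑ i, be i) := by
          rw [Real.sqrt_mul (Finset.sum_nonneg fun i _ => sq_nonneg _)]
  -- conclusion
  have htr : hM.sqrt.trace.re = ∑ i, Real.sqrt (lam i) := by
    rw [trace_sqrt_eq hM, Complex.ofReal_re]
  rw [htr]
  refine le_trans hCS ?_
  apply mul_le_mul
  · exact Real.sqrt_le_sqrt hsum1
  · exact Real.sqrt_le_sqrt hsum2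
  · exact Real.sqrt_nonneg _
  · exact Real.sqrt_nonneg _
lemma psd_trace_real {τ : Matrix (Fin n) (Fin n) ℂ} (hτ : τ.PosSemidef) :
    τ.trace = ((τ.trace.re : ℝ) : ℂ) ∧ 0 ≤ τ.trace.re := by
  have hfact : τ = hτ.sqrtᴴ * hτ.sqrt := by
    rw [hτ.posSemidef_sqrt.1.eq, hτ.sqrt_mul_self]
  have e : τ.trace = ((∑ k, ∑ j, ‖hτ.sqrt k j‖ ^ 2 : ℝ) : ℂ) := by
    conv_lhs => rw [hfact]
    exact trace_ct_mul_self _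
  rw [e, Complex.ofReal_re]
  exact ⟨rfl, Finset.sum_nonneg fun _ _ => Finset.sum_nonneg fun _ _ => sq_nonneg _⟩

lemma psd_trace_zero {τ : Matrix (Fin n) (Fin n) ℂ} (hτ : τ.PosSemidef)
    (h : τ.trace = 0) : τ = 0 := by
  have hfact : τ = hτ.sqrtᴴ * hτ.sqrt := by
    rw [hτ.posSemidef_sqrt.1.eq, hτ.sqrt_mul_self]
  have e : τ.trace = ((∑ k, ∑ j, ‖hτ.sqrt k j‖ ^ 2 : ℝ) : ℂ) := by
    conv_lhs => rw [hfact]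
    exact trace_ct_mul_self _
  rw [h] at e
  have hs : (∑ k, ∑ j, ‖hτ.sqrt k j‖ ^ 2 : ℝ) = 0 := by exact_mod_cast e.symm
  have hzero : hτ.sqrt = 0 := by
    ext k j
    have h1 := (Finset.sum_eq_zero_iff_of_nonneg
      (fun _ _ => Finset.sum_nonneg fun _ _ => sq_nonneg _)).mp hs k (Finset.mem_univ k)
    have h2 := (Finset.sum_eq_zero_iff_of_nonneg (fun _ _ => sq_nonneg _)).mp h1 j
      (Finset.mem_univ j)
    have := pow_eq_zero_iff (n := 2) (by norm_num) |>.mp h2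
    simpa using this
  rw [hfact, hzero]
  simp

lemma psqrt_zero : psqrt (0 : Matrix (Fin n) (Fin n) ℂ) = 0 := by
  rw [psqrt_of_psd Matrix.PosSemidef.zero]
  refine (Matrix.PosSemidef.eq_sqrt_of_sq_eq Matrix.PosSemidef.zero Matrix.PosSemidef.zero ?_).symm
  norm_num

/-- Fact 2: for a nonzero orthogonal projection `P` and a density matrix `ρ`,
`tr(P·ρ)` is the greatest fidelity `F(σ, ρ)` over density matrices `σ` supported on `P`. -/
theorem max_fidelity_eq_trace_proj (n : ℕ) (hn : 0 < n)
    (P ρ : Matrix (Fin n) (Fin n) ℂ)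
    (hP : P.IsHermitian) (hproj : P * P = P) (hPne : P ≠ 0)
    (hρ : ρ.PosSemidef) (hρtr : ρ.trace = 1) :
    IsGreatest
      { r : ℝ | ∃ σ : Matrix (Fin n) (Fin n) ℂ,
          σ.PosSemidef ∧ σ.trace = 1 ∧ P * σ * P = σ ∧ r = fid σ ρ }
      ((P * ρ).trace.re) := by
  have hτps : (P * ρ * P).PosSemidef := by
    have := hρ.mul_mul_conjTranspose_same (B := P)
    rwa [hP.eq] at this
  have hτtr : (P * ρ * P).trace = (P * ρ).trace := by
    rw [Matrix.trace_mul_cycle, hproj]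
  set t : ℝ := (P * ρ).trace.re with ht
  have htreal : (P * ρ).trace = (t : ℂ) := by
    have := (psd_trace_real hτps).1
    rw [hτtr] at this
    exact this
  have htnn : 0 ≤ t := by
    have := (psd_trace_real hτps).2
    rwa [hτtr] at this
  constructor
  · -- attainment
    by_cases h0 : t = 0
    · -- degenerate case : P ρ P = 0
      have hτ0 : P * ρ * P = 0 := by
        apply psd_trace_zero hτps
        rw [hτtr, htreal, h0]
        norm_num
      have hPps : P.PosSemidef := by
        have hPfact : P = Pᴴ * P := by rw [hP.eq, hproj]
        rw [hPfact]
        exact Matrix.posSemidef_conjTranspose_mul_self P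
      set p : ℝ := P.trace.re with hpdef
      have hppos : 0 < p := by
        rcases (psd_trace_real hPps) with ⟨hp1, hp2⟩
        rcases lt_or_eq_of_le hp2 with h | h
        · exact h
        · exfalso
          exact hPne (psd_trace_zero hPps (by rw [hp1, ← h]; norm_num))
      have hptr : P.trace = (p : ℂ) := (psd_trace_real hPps).1
      set σ : Matrix (Fin n) (Fin n) ℂ := ((p⁻¹ : ℝ) : ℂ) • P with hσdef
      have hσps : σ.PosSemidef := smul_psd (inv_nonneg.mpr hppos.le) hPps
      have hσtr : σ.trace = 1 := by
        rw [hσdef, Matrix.trace_smul, hptr, smul_eq_mul, ← Complex.ofReal_mul,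
          inv_mul_cancel₀ hppos.ne']
        norm_num
      have hσsup : P * σ * P = σ := by
        rw [hσdef]
        rw [mul_smul_comm, smul_mul_assoc]
        congr 1
        rw [show P * P * P = (P * P) * P from rfl, hproj, hproj]
      refine ⟨σ, hσps, hσtr, hσsup, ?_⟩
      -- fid σ ρ = 0
      set R : Matrix (Fin n) (Fin n) ℂ := ((Real.sqrt p⁻¹ : ℝ) : ℂ) • P with hRdef
      have hRps : R.PosSemidef := smul_psd (Real.sqrt_nonneg _) hPps
      have hR2 : R ^ 2 = σ := by
        rw [hRdef, hσdef, pow_two, mul_smul_comm, smul_mul_assoc, smul_smul,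
          ← Complex.ofReal_mul, Real.mul_self_sqrt (by positivity : (0:ℝ) ≤ p⁻¹), hproj]
      have hsqrtσ : psqrt σ = R := by
        rw [psqrt_of_psd hσps]
        exact (hRps.eq_sqrt_of_sq_eq hσps hR2).symm
      have hRρR : R * ρ * R = 0 := by
        simp only [hRdef, smul_mul_assoc, mul_smul_comm, smul_smul]
        rw [show P * ρ * P = 0 from hτ0, smul_zero]
      rw [h0]
      unfold fid
      rw [hsqrtσ, hRρR, psqrt_zero]
      simp
    · -- nondegenerate case
      have hpos : 0 < t := lt_of_le_of_ne htnn (Ne.symm h0)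
      set σ : Matrix (Fin n) (Fin n) ℂ := ((t⁻¹ : ℝ) : ℂ) • (P * ρ * P) with hσdef
      have hσps : σ.PosSemidef := smul_psd (inv_nonneg.mpr htnn) hτps
      have hτctr : (P * ρ * P).trace = (t : ℂ) := by rw [hτtr, htreal]
      have hσtr : σ.trace = 1 := by
        rw [hσdef, Matrix.trace_smul, hτctr, smul_eq_mul, ← Complex.ofReal_mul,
          inv_mul_cancel₀ h0]
        norm_num
      have hσsup : P * σ * P = σ := by
        rw [hσdef, mul_smul_comm, smul_mul_assoc]
        congr 1
        rw [show P * (P * ρ * P) * P = (P * P) * ρ * (P * P) by noncomm_ring, hproj]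
      refine ⟨σ, hσps, hσtr, hσsup, ?_⟩
      set S : Matrix (Fin n) (Fin n) ℂ := hσps.sqrt with hSdef
      have hsupS := sqrt_support hP hproj hσps hσsup
      have hM : S * ρ * S = ((t⁻¹ : ℝ) : ℂ) • ((P * ρ * P) * (P * ρ * P)) := by
        have e1 : S * ρ * S = S * (P * ρ * P) * S := by
          conv_rhs => rw [show S * (P * ρ * P) * S = (S * P) * ρ * (P * S) by noncomm_ring,
            hsupS.2, hsupS.1]
        have e2 : S * (P * ρ * P) * S = (t : ℂ) • (S * σ * S) := by
          rw [hσdef, mul_smul_comm, smul_mul_assoc, smul_smul, ← Complex.ofReal_mul,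
            mul_inv_cancel₀ h0]
          norm_num
        have e3 : S * σ * S = σ * σ := by
          conv_lhs => rw [← hσps.sqrt_mul_self]
          conv_rhs => rw [← hσps.sqrt_mul_self]
          rw [← hSdef]
          noncomm_ring
        have e4 : σ * σ = (((t⁻¹ * t⁻¹ : ℝ)) : ℂ) • ((P * ρ * P) * (P * ρ * P)) := by
          rw [hσdef, mul_smul_comm, smul_mul_assoc, smul_smul, ← Complex.ofReal_mul]
        rw [e1, e2, e3, e4, smul_smul, ← Complex.ofReal_mul]
        congr 2
        field_simp
      set R : Matrix (Fin n) (Fin n) ℂ := ((Real.sqrt t⁻¹ : ℝ) : ℂ) • (P * ρ * P) with hRdef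
      have hRps : R.PosSemidef := smul_psd (Real.sqrt_nonneg _) hτps
      have hMps : (S * ρ * S).PosSemidef := by
        rw [hM]
        apply smul_psd (by positivity)
        have : (P * ρ * P) * (P * ρ * P) = (P * ρ * P) ^ 2 := by rw [pow_two]
        rw [this]
        exact hτps.pow 2
      have hR2 : R ^ 2 = S * ρ * S := by
        rw [hRdef, hM, pow_two, mul_smul_comm, smul_mul_assoc, smul_smul, ← Complex.ofReal_mul,
          Real.mul_self_sqrt (by positivity : (0:ℝ) ≤ t⁻¹)]
      have hsqrtM : psqrt (S * ρ * S) = R := by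
        rw [psqrt_of_psd hMps]
        exact (hRps.eq_sqrt_of_sq_eq hMps hR2).symm
      have : fid σ ρ = t := by
        unfold fid
        rw [psqrt_of_psd hσps, ← hSdef, hsqrtM, hRdef, Matrix.trace_smul, hτctr, smul_eq_mul,
          ← Complex.ofReal_mul, Complex.ofReal_re]
        rw [mul_pow, Real.sq_sqrt (by positivity : (0:ℝ) ≤ t⁻¹)]
        field_simp
      rw [this]
  · -- upper bound
    rintro r ⟨σ, hσps, hσtr, hσsup, rfl⟩
    set S : Matrix (Fin n) (Fin n) ℂ := hσps.sqrt with hSdef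
    have hsupS := sqrt_support hP hproj hσps hσsup
    set A : Matrix (Fin n) (Fin n) ℂ := hρ.sqrt * P with hAdef
    have hfact : S * ρ * S = (A * S)ᴴ * (A * S) := by
      have hAS : A * S = hρ.sqrt * S := by
        rw [hAdef, Matrix.mul_assoc, hsupS.1]
      rw [hAS, Matrix.conjTranspose_mul, hρ.posSemidef_sqrt.1.eq, hσps.posSemidef_sqrt.1.eq]
      conv_lhs => rw [← hρ.sqrt_mul_self]
      noncomm_ring
    have hM' : ((A * S)ᴴ * (A * S)).PosSemidef := Matrix.posSemidef_conjTranspose_mul_self _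
    have hfid : fid σ ρ = hM'.sqrt.trace.re ^ 2 := by
      unfold fid
      rw [psqrt_of_psd hσps, ← hSdef, hfact, psqrt_of_psd hM']
    rw [hfid]
    have hnn : 0 ≤ hM'.sqrt.trace.re := by
      rw [trace_sqrt_eq hM', Complex.ofReal_re]
      exact Finset.sum_nonneg fun _ _ => Real.sqrt_nonneg _
    have hb := trace_sqrt_le A S hM'
    have hA2 : (A * Aᴴ).trace = (t : ℂ) := by
      have e : A * Aᴴ = hρ.sqrt * P * hρ.sqrt := by
        rw [hAdef, Matrix.conjTranspose_mul, hP.eq, hρ.posSemidef_sqrt.1.eq,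
          show hρ.sqrt * P * (P * hρ.sqrt) = hρ.sqrt * (P * P) * hρ.sqrt by noncomm_ring, hproj]
      rw [e, Matrix.trace_mul_cycle, hρ.sqrt_mul_self, Matrix.trace_mul_comm, htreal]
    have hB2 : (Sᴴ * S).trace = 1 := by
      rw [hσps.posSemidef_sqrt.1.eq, hσps.sqrt_mul_self, hσtr]
    rw [hA2, hB2] at hb
    simp only [Complex.ofReal_re, Complex.one_re, Real.sqrt_one, mul_one] at hb
    calc hM'.sqrt.trace.re ^ 2 ≤ (Real.sqrt t) ^ 2 := pow_le_pow_left₀ hnn hb 2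
      _ = t := Real.sq_sqrt htnn
end SubspaceFidelity
end
end
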